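/- arXiv:2208.08371 — 8 statements merged into one kernel-verified Lean document; each statement's English description precedes it below -/
import Mathlib

section
/- Let n ≥ 5 and let S be a set of at least two vertices of the cycle C_n satisfying: (1) every gap of S contains at most 3 vertices, and at most one gap of S contains exactly 3 vertices; (2) if a gap of S contains at least 2 vertices, then each of its neighboring gaps contains at most 1 vertex. Then S is a distance-1 resolving set of C_n. -/
/-- The `k`-truncated distance: `d_k(x,y) = min{d(x,y), k+1}`. -/
noncomputable def SimpleGraph.distK {V : Type*} (G : SimpleGraph V) (k : ℕ) (x y : V) : ℕ :=
  min (G.dist x y) (k + 1)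

/-- `S` is a distance-`k` resolving set of `G`: every pair of distinct vertices is
resolved by some vertex of `S` with respect to the `k`-truncated distance. -/
def SimpleGraph.IsDistKResolvingSet {V : Type*} (G : SimpleGraph V) (k : ℕ) (S : Set V) : Prop :=
  ∀ x y : V, x ≠ y → ∃ z ∈ S, G.distK k x z ≠ G.distK k y z

/-- The distance-`k` metric dimension of `G`. -/
noncomputable def SimpleGraph.distKDim {V : Type*} (G : SimpleGraph V) (k : ℕ) : ℕ :=
  sInf {m : ℕ | ∃ S : Set V, S.ncard = m ∧ G.IsDistKResolvingSet k S}

/-- `S` is a resolving set of `G`. -/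
def SimpleGraph.IsResolvingSet {V : Type*} (G : SimpleGraph V) (S : Set V) : Prop :=
  ∀ x y : V, x ≠ y → ∃ z ∈ S, G.dist x z ≠ G.dist y z

/-- The metric dimension of `G`. -/
noncomputable def SimpleGraph.metricDim {V : Type*} (G : SimpleGraph V) : ℕ :=
  sInf {m : ℕ | ∃ S : Set V, S.ncard = m ∧ G.IsResolvingSet S}

/-- The cycle `C_n` with vertex set `ZMod n` (vertices `u_0, …, u_{n-1}` in cyclic
order), where consecutive vertices are adjacent. -/
def cycleG (n : ℕ) : SimpleGraph (ZMod n) :=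
  SimpleGraph.fromRel (fun x y => x - y = 1)

/-- The ordered pair `(a, b)` of distinct vertices of `S` determines a gap of `S`:
the arc running forward from `a` to `b` contains no vertex of `S` in its interior.
The internal vertices of this arc are `a + 1, …, a + ((b - a).val - 1)`. -/
def IsGap (n : ℕ) (S : Set (ZMod n)) (a b : ZMod n) : Prop :=
  a ∈ S ∧ b ∈ S ∧ a ≠ b ∧ ∀ i : ℕ, 0 < i → i < (b - a).val → a + (i : ZMod n) ∉ S

/-- The number of (internal) vertices in the gap of `S` determined by `(a, b)`. -/
def gapSize (n : ℕ) (a b : ZMod n) : ℕ := (b - a).val - 1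


section StmtSixHelpers

variable {n : ℕ} {S : Set (ZMod n)}

lemma cast_ne_zero_of_lt' {k : ℕ} (hk : 0 < k) (hkn : k < n) : (k : ZMod n) ≠ 0 := by
  intro h
  have h2 := ZMod.val_natCast_of_lt hkn
  rw [h, ZMod.val_zero] at h2
  omega

lemma val_ne_zero_of_ne' {a b : ZMod n} (hab : a ≠ b) [NeZero n] : (a - b).val ≠ 0 := by
  intro hh
  exact (sub_ne_zero.2 hab) ((ZMod.val_eq_zero _).1 hh)

lemma cycle_adj (hn : 5 ≤ n) (x y : ZMod n) :
    (cycleG n).Adj x y ↔ y = x - 1 ∨ y = x + 1 := by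
  have h1 : ((1:ℕ) : ZMod n) ≠ 0 := cast_ne_zero_of_lt' one_pos (by omega)
  rw [cycleG, SimpleGraph.fromRel_adj]
  constructor
  · rintro ⟨hne, h | h⟩
    · left; linear_combination -h
    · right; linear_combination h
  · rintro (h | h)
    · refine ⟨?_, Or.inl (by linear_combination -h)⟩
      intro he; apply h1; push_cast; linear_combination h + he
    · refine ⟨?_, Or.inr (by linear_combination h)⟩
      intro he; apply h1; push_cast; linear_combination -h - he

lemma cycle_reach (hn : 5 ≤ n) (x y : ZMod n) : (cycleG n).Reachable x y := by
  haveI : NeZero n := ⟨by omega⟩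
  have key : ∀ k : ℕ, (cycleG n).Reachable x (x + (k : ZMod n)) := by
    intro k
    induction k with
    | zero => simpa using SimpleGraph.Reachable.refl x
    | succ k ih =>
      refine ih.trans (SimpleGraph.Adj.reachable ?_)
      rw [cycle_adj hn]
      right; push_cast; ring
  have h := key (y - x).val
  rwa [ZMod.natCast_val, ZMod.cast_id, add_sub_cancel] at h

open scoped Classical in
lemma distK_eq (hn : 5 ≤ n) (x z : ZMod n) :
    (cycleG n).distK 1 x z = if x = z then 0 else if (cycleG n).Adj x z then 1 else 2 := by
  unfold SimpleGraph.distK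
  split_ifs with h1 h2
  · simp [h1]
  · rw [SimpleGraph.dist_eq_one_iff_adj.2 h2]; omega
  · have hr := cycle_reach hn x z
    have hpos := hr.pos_dist_of_ne h1
    have hne1 : (cycleG n).dist x z ≠ 1 := fun h => h2 (SimpleGraph.dist_eq_one_iff_adj.1 h)
    omega

lemma exists_fwd (hn : 5 ≤ n) {v t : ZMod n} (ht : t ∈ S) (htv : t ≠ v) :
    ∃ q : ℕ, 0 < q ∧ q < n ∧ v + (q : ZMod n) ∈ S ∧ ∀ j, 0 < j → j < q → v + (j : ZMod n) ∉ S := by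
  haveI : NeZero n := ⟨by omega⟩
  classical
  have hex : ∃ i : ℕ, 0 < i ∧ v + (i : ZMod n) ∈ S := by
    refine ⟨(t - v).val, Nat.pos_of_ne_zero (val_ne_zero_of_ne' htv), ?_⟩
    rw [ZMod.natCast_val, ZMod.cast_id]
    simpa using ht
  have hle : Nat.find hex ≤ (t - v).val := by
    apply Nat.find_min' hex
    exact ⟨Nat.pos_of_ne_zero (val_ne_zero_of_ne' htv), by
      rw [ZMod.natCast_val, ZMod.cast_id]; simpa using ht⟩
  refine ⟨Nat.find hex, (Nat.find_spec hex).1, lt_of_le_of_lt hle (ZMod.val_lt _),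
    (Nat.find_spec hex).2, ?_⟩
  intro j hj0 hjq hjS
  exact Nat.find_min hex hjq ⟨hj0, hjS⟩

lemma exists_bwd (hn : 5 ≤ n) {v t : ZMod n} (ht : t ∈ S) (htv : t ≠ v) :
    ∃ p : ℕ, 0 < p ∧ p < n ∧ v - (p : ZMod n) ∈ S ∧ ∀ j, 0 < j → j < p → v - (j : ZMod n) ∉ S := by
  haveI : NeZero n := ⟨by omega⟩
  classical
  have hex : ∃ i : ℕ, 0 < i ∧ v - (i : ZMod n) ∈ S := by
    refine ⟨(v - t).val, Nat.pos_of_ne_zero (val_ne_zero_of_ne' (Ne.symm htv)), ?_⟩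
    rw [ZMod.natCast_val, ZMod.cast_id]
    simpa using ht
  have hle : Nat.find hex ≤ (v - t).val := by
    apply Nat.find_min' hex
    exact ⟨Nat.pos_of_ne_zero (val_ne_zero_of_ne' (Ne.symm htv)), by
      rw [ZMod.natCast_val, ZMod.cast_id]; simpa using ht⟩
  refine ⟨Nat.find hex, (Nat.find_spec hex).1, lt_of_le_of_lt hle (ZMod.val_lt _),
    (Nat.find_spec hex).2, ?_⟩
  intro j hj0 hjq hjS
  exact Nat.find_min hex hjq ⟨hj0, hjS⟩

lemma gap_right (hn : 5 ≤ n) {s : ZMod n} (hs : s ∈ S) {q : ℕ} (hq0 : 0 < q) (hqn : q < n)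
    (hqS : s + (q : ZMod n) ∈ S) (hmin : ∀ j, 0 < j → j < q → s + (j : ZMod n) ∉ S) :
    IsGap n S s (s + (q : ZMod n)) ∧ gapSize n s (s + (q : ZMod n)) = q - 1 := by
  have hsub : s + (q : ZMod n) - s = (q : ZMod n) := by ring
  have hval : (s + (q : ZMod n) - s).val = q := by rw [hsub]; exact ZMod.val_natCast_of_lt hqn
  refine ⟨⟨hs, hqS, ?_, ?_⟩, ?_⟩
  · intro he
    exact cast_ne_zero_of_lt' hq0 hqn (by linear_combination -he)
  · intro i hi0 hiq
    rw [hval] at hiq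
    exact hmin i hi0 hiq
  · rw [gapSize, hval]

lemma gap_left (hn : 5 ≤ n) {s : ZMod n} (hs : s ∈ S) {p : ℕ} (hp0 : 0 < p) (hpn : p < n)
    (hpS : s - (p : ZMod n) ∈ S) (hmin : ∀ j, 0 < j → j < p → s - (j : ZMod n) ∉ S) :
    IsGap n S (s - (p : ZMod n)) s ∧ gapSize n (s - (p : ZMod n)) s = p - 1 := by
  have hsub : s - (s - (p : ZMod n)) = (p : ZMod n) := by ring
  have hval : (s - (s - (p : ZMod n))).val = p := by rw [hsub]; exact ZMod.val_natCast_of_lt hpn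
  refine ⟨⟨hpS, hs, ?_, ?_⟩, ?_⟩
  · intro he
    exact cast_ne_zero_of_lt' hp0 hpn (by linear_combination -he)
  · intro i hi0 hip
    rw [hval] at hip
    have e : s - (p : ZMod n) + (i : ZMod n) = s - ((p - i : ℕ) : ZMod n) := by
      rw [Nat.cast_sub hip.le]; ring
    rw [e]
    exact hmin (p - i) (by omega) (by omega)
  · rw [gapSize, hval]

lemma gap_straddle (hn : 5 ≤ n) (hS : 2 ≤ S.ncard) {x : ZMod n} (hx : x ∉ S)
    {p q : ℕ} (hp0 : 0 < p) (hpn : p < n) (hq0 : 0 < q) (hqn : q < n)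
    (hpS : x - (p : ZMod n) ∈ S) (hpmin : ∀ j, 0 < j → j < p → x - (j : ZMod n) ∉ S)
    (hqS : x + (q : ZMod n) ∈ S) (hqmin : ∀ j, 0 < j → j < q → x + (j : ZMod n) ∉ S) :
    IsGap n S (x - (p : ZMod n)) (x + (q : ZMod n)) ∧
      gapSize n (x - (p : ZMod n)) (x + (q : ZMod n)) = p + q - 1 := by
  haveI : NeZero n := ⟨by omega⟩
  have hq_le : q ≤ n - p := by
    by_contra hlt
    push_neg at hlt
    have hmem : x + ((n - p : ℕ) : ZMod n) ∈ S := by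
      have e : ((n - p : ℕ) : ZMod n) = -(p : ZMod n) := by
        rw [Nat.cast_sub hpn.le, ZMod.natCast_self]; ring
      rw [e]
      simpa [sub_eq_add_neg] using hpS
    exact hqmin (n - p) (by omega) hlt hmem
  have hpq : p + q < n := by
    rcases Nat.lt_or_ge (p + q) n with h | h
    · exact h
    · exfalso
      have hpqn : p + q = n := by omega
      have hsub : S ⊆ {x + (q : ZMod n)} := by
        intro u hu
        have hux : u ≠ x := fun h => hx (h ▸ hu)
        set i := (u - x).val with hi
        have hi0 : i ≠ 0 := fun hh => (sub_ne_zero.2 hux) ((ZMod.val_eq_zero _).1 hh)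
        have hin : i < n := ZMod.val_lt _
        have hu' : u = x + (i : ZMod n) := by
          rw [hi, ZMod.natCast_val, ZMod.cast_id]; ring
        rcases Nat.lt_trichotomy i q with hlt | heq | hgt
        · exact absurd (hu' ▸ hu) (hqmin i (by omega) hlt)
        · rw [Set.mem_singleton_iff, hu', heq]
        · exfalso
          have h2 : u = x - ((n - i : ℕ) : ZMod n) := by
            rw [hu', Nat.cast_sub hin.le, ZMod.natCast_self]; ring
          exact hpmin (n - i) (by omega) (by omega) (h2 ▸ hu)
      have hle := Set.ncard_le_ncard hsub (Set.finite_singleton _)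
      rw [Set.ncard_singleton] at hle
      omega
  have hsub2 : x + (q : ZMod n) - (x - (p : ZMod n)) = ((p + q : ℕ) : ZMod n) := by
    push_cast; ring
  have hval : (x + (q : ZMod n) - (x - (p : ZMod n))).val = p + q := by
    rw [hsub2]; exact ZMod.val_natCast_of_lt hpq
  refine ⟨⟨hpS, hqS, ?_, ?_⟩, ?_⟩
  · intro he
    exact cast_ne_zero_of_lt' (by omega) hpq (by rw [← hsub2]; linear_combination -he)
  · intro i hi0 hipq
    rw [hval] at hipq
    rcases Nat.lt_trichotomy i p with hlt | heq | hgt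
    · have e : x - (p : ZMod n) + (i : ZMod n) = x - ((p - i : ℕ) : ZMod n) := by
        rw [Nat.cast_sub hlt.le]; ring
      rw [e]
      exact hpmin (p - i) (by omega) (by omega)
    · have e : x - (p : ZMod n) + (i : ZMod n) = x := by rw [heq]; ring
      rw [e]; exact hx
    · have e : x - (p : ZMod n) + (i : ZMod n) = x + ((i - p : ℕ) : ZMod n) := by
        rw [Nat.cast_sub hgt.le]; ring
      rw [e]
      exact hqmin (i - p) (by omega) (by omega)
  · rw [gapSize, hval]

lemma no_isolated (hn : 5 ≤ n) (hS : 2 ≤ S.ncard)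
    (hnbr : ∀ a b c, IsGap n S a b → IsGap n S b c →
      (2 ≤ gapSize n a b → gapSize n b c ≤ 1) ∧ (2 ≤ gapSize n b c → gapSize n a b ≤ 1))
    {s : ZMod n} (hs : s ∈ S) (h1 : s + 1 ∉ S) (h2 : s + 2 ∉ S)
    (h3 : s - 1 ∉ S) (h4 : s - 2 ∉ S) : False := by
  haveI : NeZero n := ⟨by omega⟩
  obtain ⟨t, ht, ht'⟩ : ∃ t ∈ S, t ≠ s := by
    obtain ⟨a, b, ha, hb, hab⟩ := (Set.one_lt_ncard_iff (Set.toFinite S)).1 (by omega)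
    rcases eq_or_ne a s with rfl | h
    · exact ⟨b, hb, fun hh => hab hh.symm⟩
    · exact ⟨a, ha, h⟩
  obtain ⟨q, hq0, hqn, hqS, hqmin⟩ := exists_fwd hn ht ht'
  obtain ⟨p, hp0, hpn, hpS, hpmin⟩ := exists_bwd hn ht ht'
  have hq3 : 3 ≤ q := by
    rcases Nat.lt_or_ge q 3 with h | h
    · interval_cases q
      · exact absurd (by simpa using hqS) h1
      · exact absurd (by simpa using hqS) h2
    · exact h
  have hp3 : 3 ≤ p := by
    rcases Nat.lt_or_ge p 3 with h | h
    · interval_cases p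
      · exact absurd (by simpa using hpS) h3
      · exact absurd (by simpa using hpS) h4
    · exact h
  obtain ⟨hg1, hs1⟩ := gap_right hn hs hq0 hqn hqS hqmin
  obtain ⟨hg2, hs2⟩ := gap_left hn hs hp0 hpn hpS hpmin
  have hc := (hnbr _ _ _ hg2 hg1).1 (by omega)
  omega

lemma mid_gap3 (hn : 5 ≤ n) (hS : 2 ≤ S.ncard)
    (hgap3 : ∀ a b, IsGap n S a b → gapSize n a b ≤ 3)
    {x : ZMod n} (hx : x ∉ S) (h1 : x + 1 ∉ S) (h2 : x - 1 ∉ S) :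
    IsGap n S (x - 2) (x + 2) ∧ gapSize n (x - 2) (x + 2) = 3 := by
  haveI : NeZero n := ⟨by omega⟩
  obtain ⟨t, ht⟩ : S.Nonempty := Set.nonempty_of_ncard_ne_zero (by omega)
  have ht' : t ≠ x := fun h => hx (h ▸ ht)
  obtain ⟨q, hq0, hqn, hqS, hqmin⟩ := exists_fwd hn ht ht'
  obtain ⟨p, hp0, hpn, hpS, hpmin⟩ := exists_bwd hn ht ht'
  have hq2 : 2 ≤ q := by
    rcases Nat.lt_or_ge q 2 with h | h
    · interval_cases q
      · exact absurd (by simpa using hqS) h1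
    · exact h
  have hp2 : 2 ≤ p := by
    rcases Nat.lt_or_ge p 2 with h | h
    · interval_cases p
      · exact absurd (by simpa using hpS) h2
    · exact h
  obtain ⟨hg, hsz⟩ := gap_straddle hn hS hx hp0 hpn hq0 hqn hpS hpmin hqS hqmin
  have hle := hgap3 _ _ hg
  have hp2' : p = 2 := by omega
  have hq2' : q = 2 := by omega
  have hcast : ((2:ℕ) : ZMod n) = (2 : ZMod n) := by push_cast; ring
  rw [hp2', hq2', hcast] at hg hsz
  exact ⟨hg, hsz⟩

end StmtSixHelpers

/-- the gap conditions guarantee a distance-1 resolving set of `C_n`, `n ≥ 5`. -/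
theorem stmt_6 (n : ℕ) (hn : 5 ≤ n) (S : Set (ZMod n)) (hS : 2 ≤ S.ncard)
    (hgap3 : ∀ a b, IsGap n S a b → gapSize n a b ≤ 3)
    (hgap3' : ∀ a b c d, IsGap n S a b → IsGap n S c d →
      gapSize n a b = 3 → gapSize n c d = 3 → a = c ∧ b = d)
    (hnbr : ∀ a b c, IsGap n S a b → IsGap n S b c →
      (2 ≤ gapSize n a b → gapSize n b c ≤ 1) ∧ (2 ≤ gapSize n b c → gapSize n a b ≤ 1)) :
    (cycleG n).IsDistKResolvingSet 1 S := by
  haveI : NeZero n := ⟨by omega⟩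
  intro x y hxy
  by_contra hcon
  push_neg at hcon
  have hxS : x ∉ S := by
    intro hxS
    have h := hcon x hxS
    rw [distK_eq hn, distK_eq hn, if_pos rfl, if_neg (Ne.symm hxy)] at h
    split_ifs at h <;> omega
  have hyS : y ∉ S := by
    intro hyS
    have h := hcon y hyS
    rw [distK_eq hn, distK_eq hn, if_neg hxy, if_pos rfl] at h
    split_ifs at h <;> omega
  have hA : ∀ z ∈ S, ((z = x - 1 ∨ z = x + 1) ↔ (z = y - 1 ∨ z = y + 1)) := by
    intro z hz
    have h := hcon z hz
    have hxz : x ≠ z := fun hh => hxS (hh ▸ hz)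
    have hyz : y ≠ z := fun hh => hyS (hh ▸ hz)
    rw [distK_eq hn, distK_eq hn, if_neg hxz, if_neg hyz] at h
    rw [← cycle_adj hn, ← cycle_adj hn]
    constructor
    · intro ha
      by_contra hb
      rw [if_pos ha, if_neg hb] at h; omega
    · intro hb
      by_contra ha
      rw [if_pos hb, if_neg ha] at h; omega
  have h2 : (2 : ZMod n) ≠ 0 := by
    have h := cast_ne_zero_of_lt' (n := n) (k := 2) (by norm_num) (by omega)
    simpa using h
  have h4 : (4 : ZMod n) ≠ 0 := by
    have h := cast_ne_zero_of_lt' (n := n) (k := 4) (by norm_num) (by omega)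
    simpa using h
  by_cases hm : x - 1 ∈ S
  · have hy1 : x - 1 = y - 1 ∨ x - 1 = y + 1 := (hA (x - 1) hm).1 (Or.inl rfl)
    have hy1' : y = x - 2 := by
      rcases hy1 with h | h
      · exact absurd (by linear_combination -h : y = x) (Ne.symm hxy)
      · linear_combination -h
    by_cases hp : x + 1 ∈ S
    · have hy2 : x + 1 = y - 1 ∨ x + 1 = y + 1 := (hA (x + 1) hp).1 (Or.inr rfl)
      have hy2' : y = x + 2 := by
        rcases hy2 with h | h
        · linear_combination -h
        · exact absurd (by linear_combination -h : y = x) (Ne.symm hxy)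
      exact h4 (by linear_combination hy1' - hy2')
    · have hym : y - 1 ∉ S := by
        intro hym
        rcases (hA (y - 1) hym).2 (Or.inl rfl) with h | h
        · exact (Ne.symm hxy) (by linear_combination h)
        · exact h4 (by linear_combination hy1' - h)
      refine no_isolated hn hS hnbr hm ?_ ?_ ?_ ?_
      · have e : x - 1 + 1 = x := by ring
        rw [e]; exact hxS
      · have e : x - 1 + 2 = x + 1 := by ring
        rw [e]; exact hp
      · have e : x - 1 - 1 = y := by rw [hy1']; ring
        rw [e]; exact hyS
      · have e : x - 1 - 2 = y - 1 := by rw [hy1']; ring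
        rw [e]; exact hym
  · by_cases hp : x + 1 ∈ S
    · have hy2 : x + 1 = y - 1 ∨ x + 1 = y + 1 := (hA (x + 1) hp).1 (Or.inr rfl)
      have hy2' : y = x + 2 := by
        rcases hy2 with h | h
        · linear_combination -h
        · exact absurd (by linear_combination -h : y = x) (Ne.symm hxy)
      have hyp : y + 1 ∉ S := by
        intro hyp
        rcases (hA (y + 1) hyp).2 (Or.inr rfl) with h | h
        · exact h4 (by linear_combination h - hy2')
        · exact (Ne.symm hxy) (by linear_combination h)
      refine no_isolated hn hS hnbr hp ?_ ?_ ?_ ?_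
      · have e : x + 1 + 1 = y := by rw [hy2']; ring
        rw [e]; exact hyS
      · have e : x + 1 + 2 = y + 1 := by rw [hy2']; ring
        rw [e]; exact hyp
      · have e : x + 1 - 1 = x := by ring
        rw [e]; exact hxS
      · have e : x + 1 - 2 = x - 1 := by ring
        rw [e]; exact hm
    · have hym : y - 1 ∉ S := by
        intro hym
        rcases (hA (y - 1) hym).2 (Or.inl rfl) with h | h
        · exact hm (h ▸ hym)
        · exact hp (h ▸ hym)
      have hyp : y + 1 ∉ S := by
        intro hyp
        rcases (hA (y + 1) hyp).2 (Or.inr rfl) with h | h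
        · exact hm (h ▸ hyp)
        · exact hp (h ▸ hyp)
      obtain ⟨hgx, hsx⟩ := mid_gap3 hn hS hgap3 hxS hp hm
      obtain ⟨hgy, hsy⟩ := mid_gap3 hn hS hgap3 hyS hyp hym
      obtain ⟨he, _⟩ := hgap3' _ _ _ _ hgx hgy hsx hsy
      exact hxy (by linear_combination he)
end

section
/- Let α ≥ 3 and let G be the tree with vertex set {v} ∪ {ℓ_1, …, ℓ_α} ∪ {s_1, …, s_{α−2}} and edges v ℓ_{α−1}, v ℓ_α, and v s_i and s_i ℓ_i for each i ∈ {1, …, α−2} (i.e., G is obtained from the star K_{1,α} by subdividing exactly α−2 edges once). Then for every positive integer k, every set Z of vertices of G that contains at least one vertex of the pair {ℓ_{α−1}, ℓ_α} and at least one vertex of each pair {s_i, ℓ_i} for i ∈ {1, …, α−2} is a distance-k resolving set of G. -/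
/-- Vertices of the spider tree obtained from `K_{1,α}` by subdividing `α - 2` edges once:
a hub `v`, leaves `ℓ_1, …, ℓ_α` (as `leaf i` for `i : Fin α`, `ℓ_{i+1} = leaf i`), and
subdivision vertices `s_1, …, s_{α-2}` (as `sub j`, `s_{j+1} = sub j`). -/
inductive SpiderV (α : ℕ) : Type where
  | hub : SpiderV α
  | leaf : Fin α → SpiderV α
  | sub : Fin (α - 2) → SpiderV α

/-- Edges: `v ℓ_{α-1}`, `v ℓ_α`, and `v s_i`, `s_i ℓ_i` for `i ∈ [α-2]`. -/
def spiderAdj (α : ℕ) : SpiderV α → SpiderV α → Prop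
  | .hub, .leaf i => α - 2 ≤ i.val
  | .hub, .sub _ => True
  | .sub j, .leaf i => j.val = i.val
  | _, _ => False

def spiderG (α : ℕ) : SimpleGraph (SpiderV α) := SimpleGraph.fromRel (spiderAdj α)

/-- any set containing a vertex of `{ℓ_{α-1}, ℓ_α}` and of each pair
`{s_i, ℓ_i}`, `i ∈ [α-2]`, is a distance-k resolving set. -/
theorem stmt_8 (α : ℕ) (hα : 3 ≤ α) (k : ℕ) (hk : 1 ≤ k) (Z : Set (SpiderV α))
    (hpair₀ : SpiderV.leaf ⟨α - 2, by omega⟩ ∈ Z ∨ SpiderV.leaf ⟨α - 1, by omega⟩ ∈ Z)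
    (hpair : ∀ j : Fin (α - 2),
      SpiderV.sub j ∈ Z ∨ SpiderV.leaf (Fin.castLE (by omega) j) ∈ Z) :
    (spiderG α).IsDistKResolvingSet k Z := by
  -- adjacency facts
  have adjHubSub : ∀ j : Fin (α - 2), (spiderG α).Adj .hub (.sub j) := by
    intro j; simp [spiderG, SimpleGraph.fromRel_adj, spiderAdj]
  have adjHubLeaf : ∀ i : Fin α, α - 2 ≤ i.val → (spiderG α).Adj .hub (.leaf i) := by
    intro i hi; simp [spiderG, SimpleGraph.fromRel_adj, spiderAdj, hi]
  have adjSubLeaf : ∀ (j : Fin (α - 2)) (i : Fin α), j.val = i.val →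
      (spiderG α).Adj (.sub j) (.leaf i) := by
    intro j i hj; simp [spiderG, SimpleGraph.fromRel_adj, spiderAdj, hj]
  have notAdjHubLeaf : ∀ i : Fin α, i.val < α - 2 → ¬ (spiderG α).Adj .hub (.leaf i) := by
    intro i hi; simp [spiderG, SimpleGraph.fromRel_adj, spiderAdj]; omega
  have notAdjLeafLeaf : ∀ i i' : Fin α, ¬ (spiderG α).Adj (.leaf i) (.leaf i') := by
    intro i i'; simp [spiderG, SimpleGraph.fromRel_adj, spiderAdj]
  have notAdjSubLeaf : ∀ (j : Fin (α - 2)) (i : Fin α), j.val ≠ i.val →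
      ¬ (spiderG α).Adj (.sub j) (.leaf i) := by
    intro j i hj; simp [spiderG, SimpleGraph.fromRel_adj, spiderAdj, hj]
  -- reachability
  have hreach : ∀ x : SpiderV α, (spiderG α).Reachable .hub x := by
    intro x
    cases x with
    | hub => exact SimpleGraph.Reachable.refl _
    | sub j => exact (adjHubSub j).reachable
    | leaf i =>
      by_cases h : α - 2 ≤ i.val
      · exact (adjHubLeaf i h).reachable
      · exact ((adjHubSub ⟨i.val, by omega⟩).reachable).trans
          (adjSubLeaf ⟨i.val, by omega⟩ i rfl).reachable
  have reach2 : ∀ x y : SpiderV α, (spiderG α).Reachable x y := fun x y =>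
    (hreach x).symm.trans (hreach y)
  -- truncated distance facts
  have hK0 : ∀ x : SpiderV α, (spiderG α).distK k x x = 0 := by
    intro x; simp [SimpleGraph.distK]
  have hK1 : ∀ x y : SpiderV α, (spiderG α).Adj x y → (spiderG α).distK k x y = 1 := by
    intro x y h
    have h1 : (spiderG α).dist x y = 1 := SimpleGraph.dist_eq_one_iff_adj.mpr h
    simp only [SimpleGraph.distK, h1]; omega
  have hKpos : ∀ x y : SpiderV α, x ≠ y → 0 < (spiderG α).distK k x y := by
    intro x y h
    have h1 := (reach2 x y).pos_dist_of_ne h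
    simp only [SimpleGraph.distK]; omega
  have hK2 : ∀ x y : SpiderV α, x ≠ y → ¬ (spiderG α).Adj x y →
      2 ≤ (spiderG α).distK k x y := by
    intro x y h hadj
    have h1 := (reach2 x y).pos_dist_of_ne h
    have h2 : (spiderG α).dist x y ≠ 1 := fun he => hadj (SimpleGraph.dist_eq_one_iff_adj.mp he)
    simp only [SimpleGraph.distK]; omega
  -- hub vs leaf, resolved by a short leaf of Z
  have short_res : ∀ a : Fin α, α - 2 ≤ a.val → SpiderV.leaf a ∈ Z → ∀ i : Fin α,
      ∃ z ∈ Z, (spiderG α).distK k .hub z ≠ (spiderG α).distK k (.leaf i) z := by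
    intro a ha haZ i
    refine ⟨_, haZ, ?_⟩
    rw [hK1 _ _ (adjHubLeaf a ha)]
    by_cases he : i = a
    · subst he; rw [hK0]; omega
    · have := hK2 (.leaf i) (.leaf a) (by simpa using he) (notAdjLeafLeaf i a); omega
  have Hhl : ∀ i : Fin α,
      ∃ z ∈ Z, (spiderG α).distK k .hub z ≠ (spiderG α).distK k (.leaf i) z := by
    intro i
    rcases hpair₀ with h0 | h0
    · exact short_res _ (by simp) h0 i
    · exact short_res _ (by simp; omega) h0 i
  -- hub vs sub
  have Hhs : ∀ j : Fin (α - 2),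
      ∃ z ∈ Z, (spiderG α).distK k .hub z ≠ (spiderG α).distK k (.sub j) z := by
    intro j
    rcases hpair j with h | h
    · refine ⟨_, h, ?_⟩
      rw [hK1 _ _ (adjHubSub j), hK0]; omega
    · refine ⟨_, h, ?_⟩
      rw [hK1 _ _ (adjSubLeaf j _ (by simp))]
      have := hK2 .hub (.leaf (Fin.castLE (by omega) j)) (by simp)
        (notAdjHubLeaf _ (by simp))
      omega
  -- sub vs sub
  have Hss : ∀ j j' : Fin (α - 2), j ≠ j' →
      ∃ z ∈ Z, (spiderG α).distK k (.sub j) z ≠ (spiderG α).distK k (.sub j') z := by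
    intro j j' hjj
    rcases hpair j with h | h
    · refine ⟨_, h, ?_⟩
      rw [hK0]
      have := hKpos (.sub j') (.sub j) (by simpa using hjj.symm)
      omega
    · refine ⟨_, h, ?_⟩
      rw [hK1 _ _ (adjSubLeaf j _ (by simp))]
      have := hK2 (.sub j') (.leaf (Fin.castLE (by omega) j)) (by simp)
        (notAdjSubLeaf j' _ (by simpa using fun hv => hjj (Fin.ext hv.symm)))
      omega
  -- sub vs leaf
  have Hsl : ∀ (j : Fin (α - 2)) (i : Fin α),
      ∃ z ∈ Z, (spiderG α).distK k (.sub j) z ≠ (spiderG α).distK k (.leaf i) z := by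
    intro j i
    rcases hpair j with h | h
    · refine ⟨_, h, ?_⟩
      rw [hK0]
      have := hKpos (.leaf i) (.sub j) (by simp)
      omega
    · by_cases he : (Fin.castLE (by omega : α - 2 ≤ α) j) = i
      · refine ⟨_, h, ?_⟩
        rw [he, hK0]
        have := hKpos (.sub j) (.leaf i) (by simp)
        omega
      · refine ⟨_, h, ?_⟩
        rw [hK1 _ _ (adjSubLeaf j _ (by simp))]
        have := hK2 (.leaf i) (.leaf (Fin.castLE (by omega) j)) (by simpa using (Ne.symm he))
          (notAdjLeafLeaf _ _)
        omega
  -- leaf vs leaf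
  have hit : ∀ a b : Fin α, a ≠ b → SpiderV.leaf a ∈ Z →
      ∃ z ∈ Z, (spiderG α).distK k (.leaf a) z ≠ (spiderG α).distK k (.leaf b) z := by
    intro a b hab h
    refine ⟨_, h, ?_⟩
    rw [hK0]
    have := hKpos (.leaf b) (.leaf a) (by simpa using hab.symm)
    omega
  have long_res : ∀ a b : Fin α, a ≠ b → a.val < α - 2 →
      ∃ z ∈ Z, (spiderG α).distK k (.leaf a) z ≠ (spiderG α).distK k (.leaf b) z := by
    intro a b hab ha
    rcases hpair ⟨a.val, ha⟩ with h | h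
    · refine ⟨_, h, ?_⟩
      rw [hK1 _ _ (adjSubLeaf ⟨a.val, ha⟩ a rfl).symm]
      have := hK2 (.leaf b) (.sub ⟨a.val, ha⟩) (by simp)
        (fun hadj => notAdjSubLeaf ⟨a.val, ha⟩ b
          (by simpa using fun hv => hab (Fin.ext hv)) hadj.symm)
      omega
    · have hca : (Fin.castLE (by omega : α - 2 ≤ α) (⟨a.val, ha⟩ : Fin (α - 2))) = a :=
        Fin.ext rfl
      rw [hca] at h
      exact hit a b hab h
  have Hll : ∀ i i' : Fin α, i ≠ i' →
      ∃ z ∈ Z, (spiderG α).distK k (.leaf i) z ≠ (spiderG α).distK k (.leaf i') z := by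
    intro i i' hii
    by_cases hi : i.val < α - 2
    · exact long_res i i' hii hi
    · by_cases hi' : i'.val < α - 2
      · obtain ⟨z, hz, hzz⟩ := long_res i' i hii.symm hi'
        exact ⟨z, hz, hzz.symm⟩
      · -- both short
        have hvne : i.val ≠ i'.val := fun hv => hii (Fin.ext hv)
        have hilt := i.isLt; have hilt' := i'.isLt
        rcases hpair₀ with h0 | h0
        · have : (⟨α - 2, by omega⟩ : Fin α) = i ∨ (⟨α - 2, by omega⟩ : Fin α) = i' := by
            rcases (by omega : i.val = α - 2 ∨ i'.val = α - 2) with hv | hv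
            · exact Or.inl (Fin.ext hv.symm)
            · exact Or.inr (Fin.ext hv.symm)
          rcases this with h | h
          · exact hit i i' hii (h ▸ h0)
          · obtain ⟨z, hz, hzz⟩ := hit i' i hii.symm (h ▸ h0)
            exact ⟨z, hz, hzz.symm⟩
        · have : (⟨α - 1, by omega⟩ : Fin α) = i ∨ (⟨α - 1, by omega⟩ : Fin α) = i' := by
            rcases (by omega : i.val = α - 1 ∨ i'.val = α - 1) with hv | hv
            · exact Or.inl (Fin.ext hv.symm)
            · exact Or.inr (Fin.ext hv.symm)
          rcases this with h | h
          · exact hit i i' hii (h ▸ h0)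
          · obtain ⟨z, hz, hzz⟩ := hit i' i hii.symm (h ▸ h0)
            exact ⟨z, hz, hzz.symm⟩
  -- assemble
  intro x y hxy
  cases x with
  | hub =>
    cases y with
    | hub => exact absurd rfl hxy
    | leaf i => exact Hhl i
    | sub j => exact Hhs j
  | leaf i =>
    cases y with
    | hub => obtain ⟨z, hz, h⟩ := Hhl i; exact ⟨z, hz, h.symm⟩
    | leaf i' => exact Hll i i' (by simpa using hxy)
    | sub j => obtain ⟨z, hz, h⟩ := Hsl j i; exact ⟨z, hz, h.symm⟩
  | sub j =>
    cases y with
    | hub => obtain ⟨z, hz, h⟩ := Hhs j; exact ⟨z, hz, h.symm⟩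
    | leaf i => exact Hsl j i
    | sub j' => exact Hss j j' (by simpa using hxy)
end

section
/- Let α ≥ 4 and let G be the tree with vertex set {v} ∪ {ℓ_1, …, ℓ_α} ∪ {s_1, …, s_{α−3}} and edges v ℓ_{α−2}, v ℓ_{α−1}, v ℓ_α, and v s_i and s_i ℓ_i for each i ∈ {1, …, α−3} (i.e., G is obtained from the star K_{1,α} by subdividing exactly α−3 edges once). Let Z be any set of vertices of G containing exactly one vertex of the pair {ℓ_{α−1}, ℓ_α} and exactly one vertex of each pair {s_i, ℓ_i} for i ∈ {1, …, α−3}, and nothing else (so |Z| = α − 2). Then for every positive integer k, Z is not a distance-k resolving set of G, but Z ∪ {ℓ_{α−2}} is a distance-k resolving set of G. -/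
/-- Vertices of the spider tree obtained from `K_{1,α}` by subdividing `α - 3` edges once:
a hub `v`, leaves `ℓ_1, …, ℓ_α` (as `leaf i` for `i : Fin α`, `ℓ_{i+1} = leaf i`), and
subdivision vertices `s_1, …, s_{α-3}` (as `sub j`, `s_{j+1} = sub j`). -/
inductive SpV (α : ℕ) : Type where
  | hub : SpV α
  | leaf : Fin α → SpV α
  | sub : Fin (α - 3) → SpV α

/-- Edges: `v ℓ_{α-2}`, `v ℓ_{α-1}`, `v ℓ_α`, and `v s_i`, `s_i ℓ_i` for `i ∈ [α-3]`. -/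
def spAdj (α : ℕ) : SpV α → SpV α → Prop
  | .hub, .leaf i => α - 3 ≤ i.val
  | .hub, .sub _ => True
  | .sub j, .leaf i => j.val = i.val
  | _, _ => False

def spG (α : ℕ) : SimpleGraph (SpV α) := SimpleGraph.fromRel (spAdj α)

/- ------------------ auxiliary lemmas ------------------ -/

attribute [local instance] Classical.propDecidable

section Aux

variable {V : Type*} {G : SimpleGraph V}

/-- distance is preserved by an isomorphism (under a reachability hypothesis). -/
lemma iso_dist_le (f : G ≃g G) (x y : V) (h : G.Reachable x y) :
    G.dist (f x) (f y) ≤ G.dist x y := by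
  obtain ⟨p, hp⟩ := h.exists_walk_length_eq_dist
  calc G.dist (f x) (f y) ≤ (p.map f.toHom).length := SimpleGraph.dist_le _
    _ = p.length := SimpleGraph.Walk.length_map _ _
    _ = G.dist x y := hp

lemma iso_dist_eq (f : G ≃g G) (x y : V) (h : G.Reachable x y) :
    G.dist (f x) (f y) = G.dist x y := by
  refine le_antisymm (iso_dist_le f x y h) ?_
  have h2 : G.Reachable (f x) (f y) := by
    obtain ⟨p⟩ := h
    exact ⟨p.map f.toHom⟩
  have := iso_dist_le f.symm (f x) (f y) h2
  simpa using this

lemma swap_adj (a b : V) (h : ∀ w, G.Adj a w ↔ G.Adj b w) :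
    ∀ u v : V, G.Adj u v → G.Adj (Equiv.swap a b u) (Equiv.swap a b v) := by
  have hnab : ¬ G.Adj a b := fun hab => G.irrefl ((h b).mp hab)
  have hnba : ¬ G.Adj b a := fun hab => hnab hab.symm
  intro u v huv
  by_cases hua : u = a
  · have huv' : G.Adj a v := hua ▸ huv
    have hva : v ≠ a := fun hv => G.irrefl (hv ▸ huv')
    have hvb : v ≠ b := fun hv => hnab (hv ▸ huv')
    rw [hua, Equiv.swap_apply_left, Equiv.swap_apply_of_ne_of_ne hva hvb]
    exact (h v).mp huv'
  by_cases hub : u = b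
  · have huv' : G.Adj b v := hub ▸ huv
    have hvb : v ≠ b := fun hv => G.irrefl (hv ▸ huv')
    have hva : v ≠ a := fun hv => hnba (hv ▸ huv')
    rw [hub, Equiv.swap_apply_right, Equiv.swap_apply_of_ne_of_ne hva hvb]
    exact (h v).mpr huv'
  rw [Equiv.swap_apply_of_ne_of_ne hua hub]
  by_cases hva : v = a
  · have huv' : G.Adj u a := hva ▸ huv
    rw [hva, Equiv.swap_apply_left]
    exact ((h u).mp huv'.symm).symm
  by_cases hvb : v = b
  · have huv' : G.Adj u b := hvb ▸ huv
    rw [hvb, Equiv.swap_apply_right]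
    exact ((h u).mpr huv'.symm).symm
  rw [Equiv.swap_apply_of_ne_of_ne hva hvb]
  exact huv

/-- swapping two vertices with the same (open) neighborhoods is an automorphism -/
noncomputable def swapIso (a b : V) (h : ∀ w, G.Adj a w ↔ G.Adj b w) : G ≃g G where
  toEquiv := Equiv.swap a b
  map_rel_iff' := by
    intro u v
    constructor
    · intro huv
      have := swap_adj a b h _ _ huv
      simpa using this
    · exact swap_adj a b h u v

lemma distK_self (k : ℕ) (x : V) : G.distK k x x = 0 := by
  simp [SimpleGraph.distK, SimpleGraph.dist_self]

lemma distK_pos {k : ℕ} {x z : V} (h : G.Reachable x z) (hne : x ≠ z) :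
    1 ≤ G.distK k x z := by
  have h1 := h.pos_dist_of_ne hne
  simp only [SimpleGraph.distK, le_min_iff]
  omega

lemma distK_adj {k : ℕ} {x z : V} (h : G.Adj x z) : G.distK k x z = 1 := by
  have h1 : G.dist x z = 1 := SimpleGraph.dist_eq_one_iff_adj.mpr h
  simp only [SimpleGraph.distK, h1]
  omega

lemma distK_ge_two {k : ℕ} (hk : 1 ≤ k) {x z : V} (h : G.Reachable x z) (hne : x ≠ z)
    (hnadj : ¬ G.Adj x z) : 2 ≤ G.distK k x z := by
  have h1 := h.pos_dist_of_ne hne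
  have h2 : G.dist x z ≠ 1 := fun hd => hnadj (SimpleGraph.dist_eq_one_iff_adj.mp hd)
  simp only [SimpleGraph.distK, le_min_iff]
  omega

lemma resolve_by {k : ℕ} (hk : 1 ≤ k) {x y z : V}
    (hxz : G.Reachable x z) (hyz : G.Reachable y z)
    (h : (x = z ∧ y ≠ z) ∨ (y = z ∧ x ≠ z) ∨
      (G.Adj x z ∧ ¬G.Adj y z ∧ y ≠ z) ∨ (G.Adj y z ∧ ¬G.Adj x z ∧ x ≠ z)) :
    G.distK k x z ≠ G.distK k y z := by
  rcases h with ⟨h1, h2⟩ | ⟨h1, h2⟩ | ⟨h1, h2, h3⟩ | ⟨h1, h2, h3⟩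
  · have := distK_pos hyz h2 (k := k)
    rw [h1, distK_self]
    omega
  · have := distK_pos hxz h2 (k := k)
    rw [h1, distK_self]
    omega
  · rw [distK_adj h1]
    have := distK_ge_two hk hyz h3 h2 (k := k)
    omega
  · rw [distK_adj h1]
    have := distK_ge_two hk hxz h3 h2 (k := k)
    omega

end Aux

/- ------------------ spider graph lemmas ------------------ -/

section Spider

variable {α : ℕ}

lemma spg_adj_iff (u v : SpV α) :
    (spG α).Adj u v ↔ u ≠ v ∧ (spAdj α u v ∨ spAdj α v u) :=
  SimpleGraph.fromRel_adj _ _ _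

lemma adjHL (i : Fin α) (h : α - 3 ≤ i.val) : (spG α).Adj .hub (.leaf i) := by
  rw [spg_adj_iff]
  exact ⟨by simp, Or.inl h⟩

lemma adjHS (j : Fin (α - 3)) : (spG α).Adj .hub (.sub j) := by
  rw [spg_adj_iff]
  exact ⟨by simp, Or.inl trivial⟩

lemma adjSL (j : Fin (α - 3)) (i : Fin α) (h : j.val = i.val) :
    (spG α).Adj (.sub j) (.leaf i) := by
  rw [spg_adj_iff]
  exact ⟨by simp, Or.inl h⟩

lemma nadjHL (i : Fin α) (h : i.val < α - 3) : ¬ (spG α).Adj .hub (.leaf i) := by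
  rw [spg_adj_iff]
  rintro ⟨-, h1 | h1⟩
  · exact absurd h1 (by simp only [spAdj]; omega)
  · simp [spAdj] at h1

lemma nadjLL (i i' : Fin α) : ¬ (spG α).Adj (.leaf i) (.leaf i') := by
  rw [spg_adj_iff]
  rintro ⟨-, h1 | h1⟩ <;> simp [spAdj] at h1

lemma nadjSS (j j' : Fin (α - 3)) : ¬ (spG α).Adj (.sub j) (.sub j') := by
  rw [spg_adj_iff]
  rintro ⟨-, h1 | h1⟩ <;> simp [spAdj] at h1

lemma nadjSL (j : Fin (α - 3)) (i : Fin α) (h : j.val ≠ i.val) :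
    ¬ (spG α).Adj (.sub j) (.leaf i) := by
  rw [spg_adj_iff]
  rintro ⟨-, h1 | h1⟩
  · exact h h1
  · simp [spAdj] at h1

lemma reach_hub (u : SpV α) (hα : 4 ≤ α) : (spG α).Reachable .hub u := by
  cases u with
  | hub => exact SimpleGraph.Reachable.refl _
  | leaf i =>
    by_cases h : α - 3 ≤ i.val
    · exact (adjHL i h).reachable
    · push_neg at h
      exact ((adjHS ⟨i.val, by omega⟩).reachable).trans (adjSL ⟨i.val, by omega⟩ i rfl).reachable
  | sub j => exact (adjHS j).reachable

lemma spPre (hα : 4 ≤ α) : (spG α).Preconnected := fun u v =>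
  (reach_hub u hα).symm.trans (reach_hub v hα)

lemma swap_dist' {V : Type*} {G : SimpleGraph V} (a b : V)
    (h : ∀ w, G.Adj a w ↔ G.Adj b w) (z : V) (hza : z ≠ a) (hzb : z ≠ b)
    (hr : G.Reachable a z) : G.dist a z = G.dist b z := by
  have hd := iso_dist_eq (swapIso a b h) a z hr
  have h1 : (swapIso a b h) a = b := Equiv.swap_apply_left a b
  have h2 : (swapIso a b h) z = z := Equiv.swap_apply_of_ne_of_ne hza hzb
  rw [h1, h2] at hd
  exact hd.symm

lemma near_nbhd {α : ℕ} (a b : Fin α) (hav : α - 3 ≤ a.val) (hbv : α - 3 ≤ b.val) :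
    ∀ w, (spG α).Adj (.leaf a) w ↔ (spG α).Adj (.leaf b) w := by
  intro w
  cases w with
  | hub =>
    constructor
    · intro _; exact (adjHL b hbv).symm
    · intro _; exact (adjHL a hav).symm
  | leaf i =>
    constructor
    · intro h; exact absurd h (nadjLL _ _)
    · intro h; exact absurd h (nadjLL _ _)
  | sub j =>
    have hj := j.isLt
    constructor
    · intro h; exact absurd h.symm (nadjSL j a (by omega))
    · intro h; exact absurd h.symm (nadjSL j b (by omega))

end Spider

/-- if `Z` consists of exactly one vertex from `{ℓ_{α-1}, ℓ_α}` and exactly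
one vertex from each pair `{s_i, ℓ_i}` (`i ∈ [α-3]`) and nothing else, then for every
`k ≥ 1`, `Z` is not a distance-k resolving set, but `Z ∪ {ℓ_{α-2}}` is. -/
theorem stmt_9 (α : ℕ) (hα : 4 ≤ α) (Z : Set (SpV α))
    (hone : (SpV.leaf ⟨α - 2, by omega⟩ ∈ Z ∧ SpV.leaf ⟨α - 1, by omega⟩ ∉ Z) ∨
      (SpV.leaf ⟨α - 1, by omega⟩ ∈ Z ∧ SpV.leaf ⟨α - 2, by omega⟩ ∉ Z))
    (hpair : ∀ j : Fin (α - 3),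
      (SpV.sub j ∈ Z ∧ SpV.leaf (Fin.castLE (by omega) j) ∉ Z) ∨
      (SpV.leaf (Fin.castLE (by omega) j) ∈ Z ∧ SpV.sub j ∉ Z))
    (honly : ∀ w ∈ Z, w = SpV.leaf ⟨α - 2, by omega⟩ ∨ w = SpV.leaf ⟨α - 1, by omega⟩ ∨
      ∃ j : Fin (α - 3), w = SpV.sub j ∨ w = SpV.leaf (Fin.castLE (by omega) j))
    (k : ℕ) (hk : 1 ≤ k) :
    ¬ (spG α).IsDistKResolvingSet k Z ∧
      (spG α).IsDistKResolvingSet k (Z ∪ {SpV.leaf ⟨α - 3, by omega⟩}) := by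
  have hA3 : α - 3 < α := by omega
  have hr : ∀ u v : SpV α, (spG α).Reachable u v := spPre hα
  constructor
  · -- Z is not a distance-k resolving set
    intro hres
    have hb : ∃ b : Fin α, α - 3 ≤ b.val ∧ b.val ≠ α - 3 ∧ SpV.leaf b ∉ Z := by
      rcases hone with ⟨-, h2⟩ | ⟨-, h2⟩
      · exact ⟨⟨α - 1, by omega⟩, by show α - 3 ≤ α - 1; omega,
          by show α - 1 ≠ α - 3; omega, h2⟩
      · exact ⟨⟨α - 2, by omega⟩, by show α - 3 ≤ α - 2; omega,
          by show α - 2 ≠ α - 3; omega, h2⟩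
    obtain ⟨b, hbv, hb3, hbZ⟩ := hb
    obtain ⟨z, hz, hne⟩ := hres (SpV.leaf ⟨α - 3, hA3⟩) (SpV.leaf b)
      (by simp only [ne_eq, SpV.leaf.injEq, Fin.ext_iff]; omega)
    have hzx : z ≠ SpV.leaf ⟨α - 3, hA3⟩ := by
      rcases honly z hz with h | h | ⟨j, h | h⟩
      · subst h; simp only [ne_eq, SpV.leaf.injEq, Fin.ext_iff]; omega
      · subst h; simp only [ne_eq, SpV.leaf.injEq, Fin.ext_iff]; omega
      · subst h; simp
      · subst h
        have := j.isLt
        simp only [ne_eq, SpV.leaf.injEq, Fin.ext_iff, Fin.coe_castLE]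
        omega
    have hzy : z ≠ SpV.leaf b := fun h => hbZ (h ▸ hz)
    have hdist : (spG α).dist (SpV.leaf ⟨α - 3, hA3⟩) z = (spG α).dist (SpV.leaf b) z :=
      swap_dist' _ _ (near_nbhd ⟨α - 3, hA3⟩ b (le_refl _) hbv) z hzx hzy (hr _ _)
    exact hne (by simp only [SimpleGraph.distK, hdist])
  · -- Z ∪ {ℓ_{α-2}} is a distance-k resolving set
    intro x y hxy
    have hLmem : SpV.leaf ⟨α - 3, hA3⟩ ∈ Z ∪ {SpV.leaf (⟨α - 3, by omega⟩ : Fin α)} :=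
      Set.mem_union_right _ rfl
    have nadjuL : ∀ (u : SpV α) (t : Fin α), u ≠ SpV.hub →
        (∀ j : Fin (α - 3), u = SpV.sub j → j.val ≠ t.val) → ¬ (spG α).Adj u (SpV.leaf t) := by
      intro u t hu hs
      cases u with
      | hub => exact absurd rfl hu
      | leaf i => exact nadjLL _ _
      | sub j => exact fun h => nadjSL j t (hs j rfl) h
    -- hub vs non-hub
    have hubC : ∀ u : SpV α, u ≠ SpV.hub →
        (spG α).distK k SpV.hub (SpV.leaf ⟨α - 3, hA3⟩) ≠
          (spG α).distK k u (SpV.leaf ⟨α - 3, hA3⟩) := by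
      intro u hu
      apply resolve_by hk (hr _ _) (hr _ _)
      by_cases hL : u = SpV.leaf ⟨α - 3, hA3⟩
      · exact Or.inr (Or.inl ⟨hL, by simp⟩)
      · refine Or.inr (Or.inr (Or.inl ⟨adjHL _ (le_refl _), ?_, hL⟩))
        apply nadjuL u _ hu
        intro j _
        have := j.isLt
        show j.val ≠ α - 3
        omega
    -- far leaf vs (any other) leaf
    have farC : ∀ (i i' : Fin α), i.val < α - 3 → i' ≠ i →
        ∃ z ∈ Z ∪ {SpV.leaf (⟨α - 3, by omega⟩ : Fin α)},
          (spG α).distK k (SpV.leaf i) z ≠ (spG α).distK k (SpV.leaf i') z := by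
      intro i i' hi hne'
      rcases hpair ⟨i.val, hi⟩ with ⟨hs, -⟩ | ⟨hl, -⟩
      · refine ⟨SpV.sub ⟨i.val, hi⟩, Or.inl hs, resolve_by hk (hr _ _) (hr _ _) ?_⟩
        refine Or.inr (Or.inr (Or.inl ⟨(adjSL _ i rfl).symm, ?_, by simp⟩))
        intro h
        refine nadjSL ⟨i.val, hi⟩ i' ?_ h.symm
        show i.val ≠ i'.val
        exact fun hvv => hne' (Fin.ext hvv.symm)
      · have hcast : SpV.leaf (Fin.castLE (by omega) (⟨i.val, hi⟩ : Fin (α - 3))) =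
            SpV.leaf i := rfl
        refine ⟨SpV.leaf i, Or.inl (by rwa [hcast] at hl),
          resolve_by hk (hr _ _) (hr _ _) ?_⟩
        exact Or.inl ⟨rfl, by simpa using hne'⟩
    -- leaf vs sub
    have lsC : ∀ (i : Fin α) (j : Fin (α - 3)),
        ∃ z ∈ Z ∪ {SpV.leaf (⟨α - 3, by omega⟩ : Fin α)},
          (spG α).distK k (SpV.leaf i) z ≠ (spG α).distK k (SpV.sub j) z := by
      intro i j
      rcases hpair j with ⟨hs, -⟩ | ⟨hl, -⟩
      · exact ⟨SpV.sub j, Or.inl hs,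
          resolve_by hk (hr _ _) (hr _ _) (Or.inr (Or.inl ⟨rfl, by simp⟩))⟩
      · by_cases hij : i.val = j.val
        · have hcast : SpV.leaf (Fin.castLE (by omega) j) = SpV.leaf i := by
            congr 1
            exact Fin.ext hij.symm
          exact ⟨SpV.leaf i, Or.inl (by rwa [hcast] at hl),
            resolve_by hk (hr _ _) (hr _ _) (Or.inl ⟨rfl, by simp⟩)⟩
        · refine ⟨SpV.leaf (Fin.castLE (by omega) j), Or.inl hl,
            resolve_by hk (hr _ _) (hr _ _) ?_⟩
          refine Or.inr (Or.inr (Or.inr ⟨adjSL j _ rfl, nadjLL _ _, ?_⟩))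
          simp only [ne_eq, SpV.leaf.injEq, Fin.ext_iff, Fin.coe_castLE]
          omega
    -- sub vs sub
    have ssC : ∀ (j j' : Fin (α - 3)), j ≠ j' →
        ∃ z ∈ Z ∪ {SpV.leaf (⟨α - 3, by omega⟩ : Fin α)},
          (spG α).distK k (SpV.sub j) z ≠ (spG α).distK k (SpV.sub j') z := by
      intro j j' hjj
      rcases hpair j with ⟨hs, -⟩ | ⟨hl, -⟩
      · refine ⟨SpV.sub j, Or.inl hs,
          resolve_by hk (hr _ _) (hr _ _) (Or.inl ⟨rfl, ?_⟩)⟩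
        simpa using (Ne.symm hjj)
      · refine ⟨SpV.leaf (Fin.castLE (by omega) j), Or.inl hl,
          resolve_by hk (hr _ _) (hr _ _) ?_⟩
        refine Or.inr (Or.inr (Or.inl ⟨adjSL j _ rfl, ?_, by simp⟩))
        refine nadjSL j' _ ?_
        show j'.val ≠ j.val
        exact fun h => hjj (Fin.ext h.symm)
    -- near leaf vs near leaf
    have nnC : ∀ (i i' : Fin α), α - 3 ≤ i.val → α - 3 ≤ i'.val → i ≠ i' →
        ∃ z ∈ Z ∪ {SpV.leaf (⟨α - 3, by omega⟩ : Fin α)},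
          (spG α).distK k (SpV.leaf i) z ≠ (spG α).distK k (SpV.leaf i') z := by
      intro i i' hi hi' hne'
      have hii' : i.val ≠ i'.val := fun h => hne' (Fin.ext h)
      have hiLt := i.isLt
      have hi'Lt := i'.isLt
      by_cases h3 : i.val = α - 3
      · refine ⟨SpV.leaf ⟨α - 3, hA3⟩, hLmem,
          resolve_by hk (hr _ _) (hr _ _) (Or.inl ⟨?_, ?_⟩)⟩
        · congr 1
          exact Fin.ext h3
        · simp only [ne_eq, SpV.leaf.injEq, Fin.ext_iff]
          omega
      by_cases h3' : i'.val = α - 3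
      · refine ⟨SpV.leaf ⟨α - 3, hA3⟩, hLmem,
          resolve_by hk (hr _ _) (hr _ _) (Or.inr (Or.inl ⟨?_, ?_⟩))⟩
        · congr 1
          exact Fin.ext h3'
        · simp only [ne_eq, SpV.leaf.injEq, Fin.ext_iff]
          omega
      rcases hone with ⟨hw, -⟩ | ⟨hw, -⟩
      · by_cases h2 : i.val = α - 2
        · refine ⟨SpV.leaf ⟨α - 2, by omega⟩, Or.inl hw,
            resolve_by hk (hr _ _) (hr _ _) (Or.inl ⟨?_, ?_⟩)⟩
          · congr 1
            exact Fin.ext h2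
          · simp only [ne_eq, SpV.leaf.injEq, Fin.ext_iff]
            omega
        · refine ⟨SpV.leaf ⟨α - 2, by omega⟩, Or.inl hw,
            resolve_by hk (hr _ _) (hr _ _) (Or.inr (Or.inl ⟨?_, ?_⟩))⟩
          · congr 1
            exact Fin.ext (show i'.val = α - 2 by omega)
          · simp only [ne_eq, SpV.leaf.injEq, Fin.ext_iff]
            omega
      · by_cases h2 : i.val = α - 1
        · refine ⟨SpV.leaf ⟨α - 1, by omega⟩, Or.inl hw,
            resolve_by hk (hr _ _) (hr _ _) (Or.inl ⟨?_, ?_⟩)⟩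
          · congr 1
            exact Fin.ext h2
          · simp only [ne_eq, SpV.leaf.injEq, Fin.ext_iff]
            omega
        · refine ⟨SpV.leaf ⟨α - 1, by omega⟩, Or.inl hw,
            resolve_by hk (hr _ _) (hr _ _) (Or.inr (Or.inl ⟨?_, ?_⟩))⟩
          · congr 1
            exact Fin.ext (show i'.val = α - 1 by omega)
          · simp only [ne_eq, SpV.leaf.injEq, Fin.ext_iff]
            omega
    -- main case analysis
    cases x with
    | hub =>
      cases y with
      | hub => exact absurd rfl hxy
      | leaf i' => exact ⟨_, hLmem, hubC (SpV.leaf i') (by simp)⟩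
      | sub j' => exact ⟨_, hLmem, hubC (SpV.sub j') (by simp)⟩
    | leaf i =>
      cases y with
      | hub => exact ⟨_, hLmem, (hubC (SpV.leaf i) (by simp)).symm⟩
      | leaf i' =>
        have hii : i ≠ i' := by simpa using hxy
        by_cases hi : i.val < α - 3
        · exact farC i i' hi hii.symm
        · by_cases hi' : i'.val < α - 3
          · obtain ⟨z, hz, hne⟩ := farC i' i hi' hii
            exact ⟨z, hz, hne.symm⟩
          · exact nnC i i' (by omega) (by omega) hii
      | sub j' => exact lsC i j'
    | sub j =>
      cases y with
      | hub => exact ⟨_, hLmem, (hubC (SpV.sub j) (by simp)).symm⟩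
      | leaf i' =>
        obtain ⟨z, hz, hne⟩ := lsC i' j
        exact ⟨z, hz, hne.symm⟩
      | sub j' => exact ssC j j' (by simpa using hxy)
end

section
/- Let α ≥ 3 and let T be the tree obtained from the path v_1 v_2 … v_α by attaching exactly three leaves ℓ_α, ℓ'_α, ℓ''_α to v_α and exactly two leaves ℓ_i, ℓ'_i to v_i for each i ∈ {1, …, α−1}. Then dim_1(T) ≥ 2α. -/
/-- Vertices of the tree obtained from the path `v_1 v_2 … v_α` by attaching three leaves
`ℓ_α, ℓ'_α, ℓ''_α` to `v_α` and two leaves `ℓ_i, ℓ'_i` to each `v_i`, `i ∈ [α-1]`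
(`v_{i+1} = v i`, `ℓ_{i+1} = leaf i`, `ℓ'_{i+1} = leaf' i` for `i : Fin α`, and
`ℓ''_α = leaf''`). -/
inductive CatV3 (α : ℕ) : Type where
  | v : Fin α → CatV3 α
  | leaf : Fin α → CatV3 α
  | leaf' : Fin α → CatV3 α
  | leaf'' : CatV3 α

/-- Edges: `v_i v_{i+1}`, `v_i ℓ_i`, `v_i ℓ'_i`, and `v_α ℓ''_α`. -/
def cat3Adj (α : ℕ) : CatV3 α → CatV3 α → Prop
  | .v i, .v j => j.val = i.val + 1
  | .v i, .leaf j => i = j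
  | .v i, .leaf' j => i = j
  | .v i, .leaf'' => i.val = α - 1
  | _, _ => False

def cat3G (α : ℕ) : SimpleGraph (CatV3 α) := SimpleGraph.fromRel (cat3Adj α)

/- ------------------- auxiliary material ------------------- -/

deriving instance DecidableEq, Fintype for CatV3

open SimpleGraph Finset

section TwinLemmas
variable {V : Type*} {G : SimpleGraph V}

lemma twin_dist_le {x y z : V} (h : ∀ w, G.Adj x w ↔ G.Adj y w)
    (hr : G.Reachable y z) (hz : z ≠ y) : G.dist x z ≤ G.dist y z := by
  obtain ⟨p, hp⟩ := hr.exists_walk_length_eq_dist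
  cases p with
  | nil => exact absurd rfl hz.symm
  | cons hadj q =>
      calc G.dist x z ≤ (SimpleGraph.Walk.cons ((h _).mpr hadj) q).length := G.dist_le _
        _ = G.dist y z := hp

lemma twin_dist {x y z : V} (h : ∀ w, G.Adj x w ↔ G.Adj y w)
    (hrx : G.Reachable x z) (hry : G.Reachable y z) (hzx : z ≠ x) (hzy : z ≠ y) :
    G.dist x z = G.dist y z :=
  le_antisymm (twin_dist_le h hry hzy) (twin_dist_le (fun w => (h w).symm) hrx hzx)

end TwinLemmas

section Cat3

variable {α : ℕ}

lemma cat3_adj_leaf {i : Fin α} {w : CatV3 α} :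
    (cat3G α).Adj (.leaf i) w ↔ w = .v i := by
  cases w <;> simp [cat3G, SimpleGraph.fromRel_adj, cat3Adj]

lemma cat3_adj_leaf' {i : Fin α} {w : CatV3 α} :
    (cat3G α).Adj (.leaf' i) w ↔ w = .v i := by
  cases w <;> simp [cat3G, SimpleGraph.fromRel_adj, cat3Adj]

lemma cat3_adj_leaf'' (hα : 0 < α) {w : CatV3 α} :
    (cat3G α).Adj .leaf'' w ↔ w = .v ⟨α - 1, by omega⟩ := by
  cases w with
  | v j =>
      simp only [cat3G, SimpleGraph.fromRel_adj, cat3Adj]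
      constructor
      · rintro ⟨-, h | h⟩
        · exact absurd h id
        · cases j; simp_all [Fin.ext_iff]
      · rintro h; cases h; simp [cat3Adj]
  | leaf j => simp [cat3G, SimpleGraph.fromRel_adj, cat3Adj]
  | leaf' j => simp [cat3G, SimpleGraph.fromRel_adj, cat3Adj]
  | leaf'' => simp [cat3G, SimpleGraph.fromRel_adj, cat3Adj]

lemma cat3_adj_chain (n : ℕ) (h : n + 1 < α) :
    (cat3G α).Adj (.v ⟨n + 1, h⟩) (.v ⟨n, by omega⟩) := by
  simp [cat3G, SimpleGraph.fromRel_adj, cat3Adj, Fin.ext_iff]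

lemma cat3_reach_v0 (h0 : 0 < α) (x : CatV3 α) :
    (cat3G α).Reachable x (.v ⟨0, h0⟩) := by
  have key : ∀ n (h : n < α), (cat3G α).Reachable (.v ⟨n, h⟩) (.v ⟨0, h0⟩) := by
    intro n
    induction n with
    | zero => intro h; rfl
    | succ n ih =>
        intro h
        exact ((cat3_adj_chain n h).reachable).trans (ih (by omega))
  cases x with
  | v i => exact key i.val i.isLt
  | leaf i =>
      exact ((cat3_adj_leaf.mpr rfl).reachable).trans (key i.val i.isLt)
  | leaf' i =>
      exact ((cat3_adj_leaf'.mpr rfl).reachable).trans (key i.val i.isLt)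
  | leaf'' =>
      exact (((cat3_adj_leaf'' h0).mpr rfl).reachable).trans (key (α - 1) (by omega))

lemma cat3_reach (h0 : 0 < α) (x y : CatV3 α) : (cat3G α).Reachable x y :=
  (cat3_reach_v0 h0 x).trans (cat3_reach_v0 h0 y).symm

end Cat3

/-- Key counting lemma: any distance-1 resolving set of `cat3G α` has at least `2α` elements. -/
lemma cat3_card_lower (α : ℕ) (hα : 3 ≤ α) (S : Set (CatV3 α))
    (hS : (cat3G α).IsDistKResolvingSet 1 S) : 2 * α ≤ S.ncard := by
  classical
  have h0 : 0 < α := by omega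
  set G := cat3G α with hG
  have hreach : ∀ x y : CatV3 α, G.Reachable x y := cat3_reach h0
  set la : Fin α := ⟨α - 1, by omega⟩ with hla
  -- `IsLeafWith x p` : the unique neighbour of `x` is `p`.
  -- twin pair lemma
  have twin : ∀ x y p : CatV3 α, x ≠ y →
      (∀ w, G.Adj x w ↔ w = p) → (∀ w, G.Adj y w ↔ w = p) → x ∈ S ∨ y ∈ S := by
    intro x y p hxy hx hy
    obtain ⟨z, hzS, hne⟩ := hS x y hxy
    by_cases hzx : z = x
    · exact Or.inl (hzx ▸ hzS)
    by_cases hzy : z = y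
    · exact Or.inr (hzy ▸ hzS)
    exfalso
    apply hne
    have : G.dist x z = G.dist y z :=
      twin_dist (fun w => by rw [hx w, hy w]) (hreach x z) (hreach y z) hzx hzy
    simp [SimpleGraph.distK, this]
  -- free-leaf lemma : two "free" leaves contradict resolution
  have free : ∀ x y p q : CatV3 α, x ≠ y →
      (∀ w, G.Adj x w ↔ w = p) → (∀ w, G.Adj y w ↔ w = q) →
      x ∉ S → p ∉ S → y ∉ S → q ∉ S → False := by
    intro x y p q hxy hx hy hxS hpS hyS hqS
    obtain ⟨z, hzS, hne⟩ := hS x y hxy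
    apply hne
    have dge : ∀ (a b : CatV3 α), a ∉ S → (∀ w, G.Adj a w ↔ w = b) → b ∉ S →
        2 ≤ G.dist a z := by
      intro a b haS hab hbS
      have hza : z ≠ a := fun h => haS (h ▸ hzS)
      have hnadj : ¬ G.Adj a z := fun h => hbS (((hab z).mp h) ▸ hzS)
      have h1 : G.dist a z ≠ 1 := fun h => hnadj (SimpleGraph.dist_eq_one_iff_adj.mp h)
      have h0' : G.dist a z ≠ 0 := fun h => by
        rcases SimpleGraph.dist_eq_zero_iff_eq_or_not_reachable.mp h with h' | h'
        · exact hza h'.symm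
        · exact h' (hreach a z)
      omega
    have d1 := dge x p hxS hx hpS
    have d2 := dge y q hyS hy hqS
    simp only [SimpleGraph.distK]
    omega
  -- set up the finite counting
  have hfin : S.Finite := Set.toFinite S
  rw [Set.ncard_eq_toFinset_card' S]
  set F : Finset (CatV3 α) := S.toFinset with hF
  have hmem : ∀ x : CatV3 α, x ∈ F ↔ x ∈ S := fun x => Set.mem_toFinset
  -- block index function
  set g : CatV3 α → Fin α := fun x => match x with
    | .v i => i | .leaf i => i | .leaf' i => i | .leaf'' => la with hg
  have hcard : F.card = ∑ i : Fin α, (F.filter (fun x => g x = i)).card :=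
    Finset.card_eq_sum_card_fiberwise (fun x _ => Finset.mem_univ (g x))
  set n : Fin α → ℕ := fun i => (F.filter (fun x => g x = i)).card with hn
  rw [hcard]
  -- helpers to bound block counts from below
  have hsub1 : ∀ (i : Fin α) (a : CatV3 α), a ∈ S → g a = i → 1 ≤ n i := by
    intro i a ha hga
    have : a ∈ F.filter (fun x => g x = i) := by
      simp [Finset.mem_filter, hmem, ha, hga]
    exact Finset.card_pos.mpr ⟨a, this⟩
  have hsub2 : ∀ (i : Fin α) (a b : CatV3 α), a ≠ b → a ∈ S → b ∈ S →
      g a = i → g b = i → 2 ≤ n i := by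
    intro i a b hab ha hb hga hgb
    have hsub : ({a, b} : Finset (CatV3 α)) ⊆ F.filter (fun x => g x = i) := by
      intro t ht
      rcases Finset.mem_insert.mp ht with h | h
      · subst h; simp [Finset.mem_filter, hmem, ha, hga]
      · rw [Finset.mem_singleton] at h; subst h
        simp [Finset.mem_filter, hmem, hb, hgb]
    calc 2 = ({a, b} : Finset (CatV3 α)).card := (Finset.card_pair hab).symm
      _ ≤ n i := Finset.card_le_card hsub
  have hsub3 : ∀ (i : Fin α) (a b c : CatV3 α), a ≠ b → a ≠ c → b ≠ c →
      a ∈ S → b ∈ S → c ∈ S → g a = i → g b = i → g c = i → 3 ≤ n i := by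
    intro i a b c hab hac hbc ha hb hc hga hgb hgc
    have hsub : ({a, b, c} : Finset (CatV3 α)) ⊆ F.filter (fun x => g x = i) := by
      intro t ht
      simp only [Finset.mem_insert, Finset.mem_singleton] at ht
      rcases ht with h | h | h <;>
        (subst h; simp [Finset.mem_filter, hmem, ha, hb, hc, hga, hgb, hgc])
    have hcard3 : ({a, b, c} : Finset (CatV3 α)).card = 3 := by
      rw [Finset.card_insert_of_notMem (by simp [hab, hac]), Finset.card_pair hbc]
    calc 3 = ({a, b, c} : Finset (CatV3 α)).card := hcard3.symm
      _ ≤ n i := Finset.card_le_card hsub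
  -- twin facts
  have hpair : ∀ i : Fin α, (CatV3.leaf i) ∈ S ∨ (CatV3.leaf' i) ∈ S := by
    intro i
    exact twin _ _ (.v i) (by simp) (fun w => cat3_adj_leaf) (fun w => cat3_adj_leaf')
  have hla'' : ∀ w, G.Adj .leaf'' w ↔ w = .v la := fun w => cat3_adj_leaf'' h0
  have hp1 : (CatV3.leaf la) ∈ S ∨ (CatV3.leaf'' : CatV3 α) ∈ S :=
    twin _ _ (.v la) (by simp) (fun w => cat3_adj_leaf) hla''
  have hp2 : (CatV3.leaf' la) ∈ S ∨ (CatV3.leaf'' : CatV3 α) ∈ S :=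
    twin _ _ (.v la) (by simp) (fun w => cat3_adj_leaf') hla''
  -- last block has at least two elements (two of the three leaves are in S)
  have hlast2 : 2 ≤ n la := by
    rcases hpair la with h1 | h1
    · rcases hp2 with h2 | h2
      · exact hsub2 la _ _ (by simp) h1 h2 rfl rfl
      · exact hsub2 la _ _ (by simp) h1 h2 rfl rfl
    · rcases hp1 with h2 | h2
      · exact hsub2 la _ _ (by simp) h2 h1 rfl rfl
      · exact hsub2 la _ _ (by simp) h1 h2 rfl rfl
  by_cases hA : ∀ i : Fin α, i ≠ la → 2 ≤ n i
  · -- all blocks have at least 2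
    have hall : ∀ i : Fin α, i ∈ Finset.univ → 2 ≤ n i := by
      intro i _
      by_cases hi : i = la
      · exact hi ▸ hlast2
      · exact hA i hi
    calc 2 * α = Finset.univ.card • 2 := by
          simp [Finset.card_univ, Fintype.card_fin, mul_comm, smul_eq_mul]
      _ ≤ ∑ i : Fin α, n i := Finset.card_nsmul_le_sum _ _ _ hall
  · push_neg at hA
    obtain ⟨j, hjla, hnj⟩ := hA
    -- block j is deficient : exactly one leaf in S, v j ∉ S; gives a free leaf x0
    have hvj : (CatV3.v j) ∉ S := by
      intro hv
      rcases hpair j with h1 | h1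
      · exact absurd (hsub2 j _ _ (by simp) h1 hv rfl rfl) (by omega)
      · exact absurd (hsub2 j _ _ (by simp) h1 hv rfl rfl) (by omega)
    have hnotboth : ¬ ((CatV3.leaf j) ∈ S ∧ (CatV3.leaf' j) ∈ S) := by
      rintro ⟨h1, h2⟩
      exact absurd (hsub2 j _ _ (by simp) h1 h2 rfl rfl) (by omega)
    -- the free leaf of block j
    obtain ⟨x0, hx0a, hx0S⟩ :
        ∃ x0 : CatV3 α, (∀ w, G.Adj x0 w ↔ w = .v j) ∧ x0 ∉ S := by
      rcases hpair j with h1 | h1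
      · exact ⟨.leaf' j, fun w => cat3_adj_leaf', fun h => hnotboth ⟨h1, h⟩⟩
      · exact ⟨.leaf j, fun w => cat3_adj_leaf, fun h => hnotboth ⟨h, h1⟩⟩
    -- refine: record the shape of the free leaf of block j
    obtain ⟨x0, hx0form, hx0a, hx0S⟩ :
        ∃ x0 : CatV3 α, (x0 = CatV3.leaf j ∨ x0 = CatV3.leaf' j) ∧
          (∀ w, G.Adj x0 w ↔ w = .v j) ∧ x0 ∉ S := by
      rcases hpair j with h1 | h1
      · exact ⟨.leaf' j, Or.inr rfl, fun w => cat3_adj_leaf', fun h => hnotboth ⟨h1, h⟩⟩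
      · exact ⟨.leaf j, Or.inl rfl, fun w => cat3_adj_leaf, fun h => hnotboth ⟨h, h1⟩⟩
    have hjval : (j : Fin α).val ≠ α - 1 := fun h => hjla (Fin.ext (by simp [hla, h]))
    have hx0ne : ∀ y : CatV3 α,
        (y = CatV3.leaf la ∨ y = CatV3.leaf' la ∨ y = CatV3.leaf'') → x0 ≠ y := by
      rintro y (rfl | rfl | rfl) <;> rcases hx0form with rfl | rfl <;>
        simp [hla, Fin.ext_iff] <;> omega
    -- last block has at least three elements
    have hlast3 : 3 ≤ n la := by
      by_cases hL : (CatV3.leaf la) ∈ S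
      · by_cases hL' : (CatV3.leaf' la) ∈ S
        · by_cases hL'' : (CatV3.leaf'' : CatV3 α) ∈ S
          · exact hsub3 la (.leaf la) (.leaf' la) .leaf''
              (by simp) (by simp) (by simp) hL hL' hL'' rfl rfl rfl
          · by_cases hv : (CatV3.v la) ∈ S
            · exact hsub3 la (.leaf la) (.leaf' la) (.v la)
                (by simp) (by simp) (by simp) hL hL' hv rfl rfl rfl
            · exact absurd (free x0 .leaf'' (.v j) (.v la)
                (hx0ne _ (Or.inr (Or.inr rfl))) hx0a hla'' hx0S hvj hL'' hv) id
        · have hL'' : (CatV3.leaf'' : CatV3 α) ∈ S := hp2.resolve_left hL'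
          by_cases hv : (CatV3.v la) ∈ S
          · exact hsub3 la (.leaf la) .leaf'' (.v la)
              (by simp) (by simp) (by simp) hL hL'' hv rfl rfl rfl
          · exact absurd (free x0 (.leaf' la) (.v j) (.v la)
              (hx0ne _ (Or.inr (Or.inl rfl))) hx0a (fun w => cat3_adj_leaf')
              hx0S hvj hL' hv) id
      · have hL' : (CatV3.leaf' la) ∈ S := (hpair la).resolve_left hL
        have hL'' : (CatV3.leaf'' : CatV3 α) ∈ S := hp1.resolve_left hL
        by_cases hv : (CatV3.v la) ∈ S
        · exact hsub3 la (.leaf' la) .leaf'' (.v la)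
            (by simp) (by simp) (by simp) hL' hL'' hv rfl rfl rfl
        · exact absurd (free x0 (.leaf la) (.v j) (.v la)
            (hx0ne _ (Or.inl rfl)) hx0a (fun w => cat3_adj_leaf)
            hx0S hvj hL hv) id
    -- all other blocks have at least two elements
    have hmid : ∀ i : Fin α, i ≠ j → i ≠ la → 2 ≤ n i := by
      intro i hij hila
      have hij' : ¬ (i : Fin α).val = j.val := fun h => hij (Fin.ext h)
      have hx0ne' : ∀ y : CatV3 α,
          (y = CatV3.leaf i ∨ y = CatV3.leaf' i) → x0 ≠ y := by
        rintro y (rfl | rfl) <;> rcases hx0form with rfl | rfl <;>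
          simp [Fin.ext_iff] <;> omega
      by_cases h1 : (CatV3.leaf i) ∈ S
      · by_cases h2 : (CatV3.leaf' i) ∈ S
        · exact hsub2 i _ _ (by simp) h1 h2 rfl rfl
        · by_cases hv : (CatV3.v i) ∈ S
          · exact hsub2 i (.leaf i) (.v i) (by simp) h1 hv rfl rfl
          · exact absurd (free x0 (.leaf' i) (.v j) (.v i)
              (hx0ne' _ (Or.inr rfl)) hx0a (fun w => cat3_adj_leaf')
              hx0S hvj h2 hv) id
      · have h2 : (CatV3.leaf' i) ∈ S := (hpair i).resolve_left h1
        by_cases hv : (CatV3.v i) ∈ S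
        · exact hsub2 i (.leaf' i) (.v i) (by simp) h2 hv rfl rfl
        · exact absurd (free x0 (.leaf i) (.v j) (.v i)
            (hx0ne' _ (Or.inl rfl)) hx0a (fun w => cat3_adj_leaf)
            hx0S hvj h1 hv) id
    -- sum everything up
    have hnj1 : 1 ≤ n j := by
      rcases hpair j with h1 | h1
      · exact hsub1 j _ h1 rfl
      · exact hsub1 j _ h1 rfl
    have hsubU : ({j, la} : Finset (Fin α)) ⊆ Finset.univ := Finset.subset_univ _
    have hsum : ∑ i ∈ (Finset.univ \ {j, la}), n i + (n j + n la) = ∑ i : Fin α, n i := by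
      rw [← Finset.sum_pair hjla]
      exact Finset.sum_sdiff hsubU
    have hcard' : (Finset.univ \ ({j, la} : Finset (Fin α))).card = α - 2 := by
      rw [Finset.card_sdiff_of_subset hsubU, Finset.card_pair hjla]
      simp [Finset.card_univ]
    have hrest : (Finset.univ \ ({j, la} : Finset (Fin α))).card • 2 ≤
        ∑ i ∈ (Finset.univ \ {j, la}), n i := by
      apply Finset.card_nsmul_le_sum
      intro i hi
      rw [Finset.mem_sdiff, Finset.mem_insert, Finset.mem_singleton] at hi
      push_neg at hi
      exact hmid i hi.2.1 hi.2.2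
    rw [hcard', smul_eq_mul] at hrest
    rw [← hsum]
    omega

/-- for this tree `T` with `α ≥ 3`, `dim_1(T) ≥ 2α`. -/
theorem stmt_12 (α : ℕ) (hα : 3 ≤ α) : 2 * α ≤ (cat3G α).distKDim 1 := by
  have h0 : 0 < α := by omega
  apply le_csInf
  · refine ⟨(Set.univ : Set (CatV3 α)).ncard, Set.univ, rfl, ?_⟩
    intro x y hxy
    refine ⟨x, Set.mem_univ x, ?_⟩
    have hne : (cat3G α).dist y x ≠ 0 := fun h => by
      rcases SimpleGraph.dist_eq_zero_iff_eq_or_not_reachable.mp h with h' | h'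
      · exact hxy h'.symm
      · exact h' (cat3_reach h0 y x)
    simp only [SimpleGraph.distK, SimpleGraph.dist_self]
    omega
  · rintro b ⟨S, rfl, hS⟩
    exact cat3_card_lower α hα S hS
end

section
/- Let α ≥ 3 and let T be the tree obtained from the path v_1 v_2 … v_α by attaching exactly three leaves ℓ_α, ℓ'_α, ℓ''_α to v_α and exactly two leaves ℓ_i, ℓ'_i to v_i for each i ∈ {1, …, α−1}. Let k ≥ 2 be an integer and let Z be any set consisting of exactly one vertex from each pair {ℓ_i, ℓ'_i}, i ∈ {1, …, α} (so |Z| = α). Then Z is not a distance-k resolving set of T, Z ∪ {ℓ''_α} is a distance-k resolving set of T, and dim_k(T) = α + 1. -/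
/-!
Distances in the caterpillar are the spine distance between the positions plus one for each
endpoint that is a leaf. Leaves hanging from the same spine vertex are twins, so a resolving
set misses at most one of each twin class: at least `α + 1` vertices. Conversely, take one leaf
at every spine vertex together with `ℓ''_α`. The chosen leaf at the position of `x` separates
`x` from every vertex at a farther position except when `x` is a leaf at `v_i` and `y = v_{i+1}`,
and there the chosen leaf at `v_{i+1}` does; since `k ≥ 2`, none of the distances involved is
truncated.
-/

namespace SimpleGraph

variable {V : Type*} {G : SimpleGraph V}

theorem le_length_of_adj_le (D : V → V → ℕ) (hself : ∀ y, D y y = 0)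
    (hadj : ∀ x x' y, G.Adj x x' → D x y ≤ D x' y + 1) {x y : V} (p : G.Walk x y) :
    D x y ≤ p.length := by
  induction p with
  | nil => simp [hself]
  | cons h _ ih => simpa using (hadj _ _ _ h).trans (Nat.add_le_add_right ih 1)

theorem Reachable.le_dist_of_adj_le (D : V → V → ℕ) (hself : ∀ y, D y y = 0)
    (hadj : ∀ x x' y, G.Adj x x' → D x y ≤ D x' y + 1) {x y : V} (h : G.Reachable x y) :
    D x y ≤ G.dist x y := by
  obtain ⟨p, hp⟩ := h.exists_walk_length_eq_dist
  exact hp ▸ le_length_of_adj_le D hself hadj p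

@[simp]
theorem distK_self (k : ℕ) (x : V) : G.distK k x x = 0 := by
  simp [distK]

theorem Connected.distK_pos (hG : G.Connected) (k : ℕ) {x y : V} (hxy : x ≠ y) :
    0 < G.distK k x y :=
  lt_min (hG.pos_dist_of_ne hxy) k.succ_pos

theorem IsDistKResolvingSet.mem_or_mem {k : ℕ} {S : Set V} (hS : G.IsDistKResolvingSet k S)
    {u w : V} (huw : u ≠ w)
    (htwin : ∀ z, z ≠ u → z ≠ w → G.distK k u z = G.distK k w z) :
    u ∈ S ∨ w ∈ S := by
  by_contra! h
  obtain ⟨z, hzS, hz⟩ := hS u w huw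
  exact hz (htwin z (ne_of_mem_of_not_mem hzS h.1) (ne_of_mem_of_not_mem hzS h.2))

theorem distKDim_eq {k n : ℕ} {S : Set V} (hS : G.IsDistKResolvingSet k S) (hcard : S.ncard ≤ n)
    (hlower : ∀ S : Set V, G.IsDistKResolvingSet k S → n ≤ S.ncard) : G.distKDim k = n := by
  unfold distKDim
  refine le_antisymm (le_trans (Nat.sInf_le ⟨S, rfl, hS⟩) hcard)
    (le_csInf ⟨S.ncard, S, rfl, hS⟩ ?_)
  rintro m ⟨T, rfl, hT⟩
  exact hlower T hT

end SimpleGraph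

namespace CatV3

open SimpleGraph

variable {α : ℕ}

def pos : CatV3 α → ℕ
  | v i | leaf i | leaf' i => i
  | leaf'' => α - 1

def depth : CatV3 α → ℕ
  | v _ => 0
  | _ => 1

theorem pos_lt (hα : 0 < α) : ∀ x : CatV3 α, pos x < α
  | v i | leaf i | leaf' i => i.isLt
  | leaf'' => Nat.sub_lt hα one_pos

theorem depth_le_one (x : CatV3 α) : depth x ≤ 1 := by
  cases x <;> simp [depth]

theorem cat3G_adj {x y : CatV3 α} :
    (cat3G α).Adj x y ↔ x ≠ y ∧ (cat3Adj α x y ∨ cat3Adj α y x) :=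
  fromRel_adj _ _ _

open Classical in
noncomputable def treeDist (x y : CatV3 α) : ℕ :=
  if x = y then 0 else Nat.dist (pos x) (pos y) + depth x + depth y

theorem dist_pos_add_depth_add_depth_of_adj {x x' : CatV3 α} (h : (cat3G α).Adj x x') :
    Nat.dist (pos x) (pos x') + depth x + depth x' = 1 := by
  obtain ⟨-, h | h⟩ := cat3G_adj.1 h <;> cases x <;> cases x' <;>
    simp_all [cat3Adj, pos, depth, Nat.dist]

theorem treeDist_le_treeDist_add_one {x x' : CatV3 α} (h : (cat3G α).Adj x x') (y : CatV3 α) :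
    treeDist x y ≤ treeDist x' y + 1 := by
  have hxx' := dist_pos_add_depth_add_depth_of_adj h
  by_cases hxy : x = y
  · simp [treeDist, hxy]
  by_cases hx'y : x' = y
  · subst hx'y
    simp [treeDist, hxy, hxx']
  have := Nat.dist.triangle_inequality (pos x) (pos x') (pos y)
  rw [treeDist, treeDist, if_neg hxy, if_neg hx'y]
  omega

theorem exists_walk_v_v_of_add : ∀ (n : ℕ) (i j : Fin α), j.val = i.val + n →
    ∃ p : (cat3G α).Walk (v i) (v j), p.length = n
  | 0, i, j, h => by
    obtain rfl : j = i := Fin.ext h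
    exact ⟨.nil, rfl⟩
  | n + 1, i, j, h => by
    let i' : Fin α := ⟨i + 1, by omega⟩
    have hadj : (cat3G α).Adj (v i) (v i') := cat3G_adj.2 ⟨by simp [i', Fin.ext_iff], .inl rfl⟩
    obtain ⟨p, hp⟩ := exists_walk_v_v_of_add n i' j (by simp only [i']; omega)
    exact ⟨.cons hadj p, by simp [hp]⟩

theorem exists_walk_v_v (i j : Fin α) :
    ∃ p : (cat3G α).Walk (v i) (v j), p.length = Nat.dist i j := by
  rcases le_total i.val j.val with h | h
  · obtain ⟨p, hp⟩ := exists_walk_v_v_of_add (j - i) i j (by omega)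
    exact ⟨p, by rw [hp, Nat.dist]; omega⟩
  · obtain ⟨p, hp⟩ := exists_walk_v_v_of_add (i - j) j i (by omega)
    exact ⟨p.reverse, by rw [Walk.length_reverse, hp, Nat.dist]; omega⟩

theorem exists_walk_to_spine (hα : 0 < α) (x : CatV3 α) :
    ∃ p : (cat3G α).Walk x (v ⟨pos x, pos_lt hα x⟩), p.length = depth x := by
  cases x with
  | v i => exact ⟨.nil, rfl⟩
  | leaf i | leaf' i | leaf'' =>
    exact ⟨.cons (cat3G_adj.2 ⟨by simp, .inr (by simp [cat3Adj, pos])⟩) .nil, rfl⟩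

theorem exists_walk (hα : 0 < α) (x y : CatV3 α) :
    ∃ p : (cat3G α).Walk x y, p.length = Nat.dist (pos x) (pos y) + depth x + depth y := by
  obtain ⟨p, hp⟩ := exists_walk_to_spine hα x
  obtain ⟨q, hq⟩ := exists_walk_v_v ⟨pos x, pos_lt hα x⟩ ⟨pos y, pos_lt hα y⟩
  obtain ⟨r, hr⟩ := exists_walk_to_spine hα y
  refine ⟨(p.append q).append r.reverse, ?_⟩
  simp only [Walk.length_append, Walk.length_reverse, hp, hq, hr]
  omega

theorem cat3G_connected (hα : 0 < α) : (cat3G α).Connected :=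
  (connected_iff_exists_forall_reachable _).2
    ⟨v ⟨0, hα⟩, fun y => (exists_walk hα _ y).elim fun p _ => ⟨p⟩⟩

theorem dist_cat3G (hα : 0 < α) (x y : CatV3 α) : (cat3G α).dist x y = treeDist x y := by
  refine le_antisymm ?_ (((cat3G_connected hα).preconnected x y).le_dist_of_adj_le treeDist
    (by simp [treeDist]) fun _ _ _ h => treeDist_le_treeDist_add_one h _)
  by_cases hxy : x = y
  · simp [hxy]
  obtain ⟨p, hp⟩ := exists_walk hα x y
  simpa [treeDist, hxy, hp] using dist_le p

theorem distK_cat3G (hα : 0 < α) (k : ℕ) {x y : CatV3 α} (hxy : x ≠ y) :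
    (cat3G α).distK k x y = min (Nat.dist (pos x) (pos y) + depth x + depth y) (k + 1) := by
  rw [distK, dist_cat3G hα, treeDist, if_neg hxy]

theorem distK_eq_of_pos_eq {k : ℕ} {u w z : CatV3 α} (hα : 0 < α) (hp : pos u = pos w)
    (hu : depth u = 1) (hw : depth w = 1) (hzu : z ≠ u) (hzw : z ≠ w) :
    (cat3G α).distK k u z = (cat3G α).distK k w z := by
  rw [distK_cat3G hα k hzu.symm, distK_cat3G hα k hzw.symm, hp, hu, hw]

instance : Finite (CatV3 α) :=
  Finite.of_injective (β := Fin α ⊕ Fin α ⊕ Fin α ⊕ Unit)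
    (fun
      | v i => .inl i
      | leaf i => .inr (.inl i)
      | leaf' i => .inr (.inr (.inl i))
      | leaf'' => .inr (.inr (.inr ())))
    fun x y h => by cases x <;> cases y <;> simp_all

variable {k : ℕ} {S : Set (CatV3 α)}

theorem leaf_mem_or_leaf'_mem (hS : (cat3G α).IsDistKResolvingSet k S) (i : Fin α) :
    leaf i ∈ S ∨ leaf' i ∈ S :=
  hS.mem_or_mem (by simp) fun _ => distK_eq_of_pos_eq i.pos rfl rfl rfl

theorem leaf_mem_or_leaf''_mem (hS : (cat3G α).IsDistKResolvingSet k S)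
    {i : Fin α} (hi : i.val = α - 1) : leaf i ∈ S ∨ leaf'' ∈ S :=
  hS.mem_or_mem (by simp) fun _ => distK_eq_of_pos_eq i.pos hi rfl rfl

theorem leaf'_mem_or_leaf''_mem (hS : (cat3G α).IsDistKResolvingSet k S)
    {i : Fin α} (hi : i.val = α - 1) : leaf' i ∈ S ∨ leaf'' ∈ S :=
  hS.mem_or_mem (by simp) fun _ => distK_eq_of_pos_eq i.pos hi rfl rfl

/-- At the last spine vertex `S` must contain two of the three twin leaves, hence the extra `1`. -/
theorem add_one_le_ncard (hα : 0 < α) (hS : (cat3G α).IsDistKResolvingSet k S) :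
    α + 1 ≤ S.ncard := by
  classical
  let last : Fin α := ⟨α - 1, by omega⟩
  let a : Fin α → CatV3 α := fun i => if leaf i ∈ S then leaf i else leaf' i
  let b : CatV3 α := if leaf'' ∈ S then leaf'' else leaf' last
  have ha_pos (i : Fin α) : pos (a i) = i := by unfold a; split_ifs <;> rfl
  have haS (i : Fin α) : a i ∈ S := by
    unfold a; split_ifs with h
    exacts [h, (leaf_mem_or_leaf'_mem hS i).resolve_left h]
  have hb : b ∈ S ∧ ∀ i, a i ≠ b := by
    unfold b; split_ifs with h
    · exact ⟨h, fun i => by unfold a; split_ifs <;> simp⟩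
    · have hlast : leaf last ∈ S := (leaf_mem_or_leaf''_mem hS rfl).resolve_right h
      refine ⟨(leaf'_mem_or_leaf''_mem hS rfl).resolve_right h, fun i hi => ?_⟩
      obtain rfl : i = last := Fin.ext (by rw [← ha_pos i, hi]; rfl)
      simp [a, hlast] at hi
  let f : Option (Fin α) → CatV3 α := fun o => o.elim b a
  have hf : Function.Injective f := by
    rintro (_ | i) (_ | j) h
    · rfl
    · exact absurd h.symm (hb.2 j)
    · exact absurd h (hb.2 i)
    · exact congrArg some (Fin.ext ((ha_pos i).symm.trans ((congrArg pos h).trans (ha_pos j))))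
  have hfS : Set.range f ⊆ S := by
    rintro _ ⟨_ | i, rfl⟩
    exacts [hb.1, haS i]
  calc α + 1 = (Set.range f).ncard := by simp [Set.ncard_range_of_injective hf]
    _ ≤ S.ncard := Set.ncard_le_ncard hfS

theorem exists_leaf_mem (hS : ∀ i, leaf i ∈ S ∨ leaf' i ∈ S) (i : Fin α) :
    ∃ z ∈ S, pos z = i ∧ depth z = 1 :=
  (hS i).elim (fun h => ⟨_, h, rfl, rfl⟩) fun h => ⟨_, h, rfl, rfl⟩

theorem eq_of_notMem_of_pos_eq (hS : ∀ i, leaf i ∈ S ∨ leaf' i ∈ S) (h'' : leaf'' ∈ S)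
    {x y : CatV3 α} (hx : x ∉ S) (hy : y ∉ S) (hp : pos x = pos y) (hd : depth x = depth y) :
    x = y := by
  cases x <;> cases y <;> simp_all [pos, depth, Fin.val_inj]
  all_goals have := hS ‹Fin α›; tauto

theorem exists_distK_ne_of_pos_le (hα : 0 < α) (hk : 2 ≤ k)
    (hS : ∀ i, leaf i ∈ S ∨ leaf' i ∈ S) (h'' : leaf'' ∈ S)
    {x y : CatV3 α} (hxy : x ≠ y) (hle : pos x ≤ pos y) :
    ∃ z ∈ S, (cat3G α).distK k x z ≠ (cat3G α).distK k y z := by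
  by_cases hxS : x ∈ S
  · exact ⟨x, hxS, by simpa using ((cat3G_connected hα).distK_pos k hxy.symm).ne⟩
  by_cases hyS : y ∈ S
  · exact ⟨y, hyS, by simpa using ((cat3G_connected hα).distK_pos k hxy).ne'⟩
  have hdx := depth_le_one x
  have hdy := depth_le_one y
  obtain ⟨z, hzS, hzp : pos z = pos x, hzd⟩ := exists_leaf_mem hS ⟨pos x, pos_lt hα x⟩
  by_cases hres : (cat3G α).distK k x z = (cat3G α).distK k y z
  swap
  · exact ⟨z, hzS, hres⟩
  rw [distK_cat3G hα k (ne_of_mem_of_not_mem hzS hxS).symm,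
    distK_cat3G hα k (ne_of_mem_of_not_mem hzS hyS).symm, hzp, hzd, Nat.dist, Nat.dist]
    at hres
  rcases hle.eq_or_lt with heq | hlt
  · exact absurd (eq_of_notMem_of_pos_eq hS h'' hxS hyS heq (by omega)) hxy
  -- `z` fails only for a leaf `x` at `v_i` and `y = v_{i+1}`; the leaf at `v_{i+1}` splits them.
  obtain ⟨z', hz'S, hz'p : pos z' = pos y, hz'd⟩ := exists_leaf_mem hS ⟨pos y, pos_lt hα y⟩
  refine ⟨z', hz'S, ?_⟩
  rw [distK_cat3G hα k (ne_of_mem_of_not_mem hz'S hxS).symm,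
    distK_cat3G hα k (ne_of_mem_of_not_mem hz'S hyS).symm, hz'p, hz'd, Nat.dist, Nat.dist]
  omega

theorem isDistKResolvingSet_of_forall_leaf_mem (hα : 0 < α) (hk : 2 ≤ k)
    (hS : ∀ i, leaf i ∈ S ∨ leaf' i ∈ S) (h'' : leaf'' ∈ S) :
    (cat3G α).IsDistKResolvingSet k S := by
  intro x y hxy
  rcases le_total (pos x) (pos y) with h | h
  · exact exists_distK_ne_of_pos_le hα hk hS h'' hxy h
  · obtain ⟨z, hzS, hz⟩ := exists_distK_ne_of_pos_le hα hk hS h'' hxy.symm h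
    exact ⟨z, hzS, hz.symm⟩

theorem ncard_le_of_injOn_pos (hα : 0 < α) (h : Set.InjOn pos S) : S.ncard ≤ α :=
  (Set.ncard_le_ncard_of_injOn pos (fun z _ => pos_lt hα z) h (Set.finite_Iio α)).trans_eq
    (Set.ncard_Iio_nat α)

end CatV3

open CatV3 SimpleGraph in
/-- for this tree `T` with `α ≥ 3` and `k ≥ 2`, if `Z` consists of exactly
one vertex from each pair `{ℓ_i, ℓ'_i}` (so `|Z| = α`), then `Z` is not a distance-k
resolving set, `Z ∪ {ℓ''_α}` is a distance-k resolving set, and `dim_k(T) = α + 1`. -/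
theorem stmt_13 (α : ℕ) (hα : 3 ≤ α) (k : ℕ) (hk : 2 ≤ k) (Z : Set (CatV3 α))
    (hpair : ∀ i : Fin α,
      (CatV3.leaf i ∈ Z ∧ CatV3.leaf' i ∉ Z) ∨ (CatV3.leaf' i ∈ Z ∧ CatV3.leaf i ∉ Z))
    (honly : ∀ w ∈ Z, ∃ i : Fin α, w = CatV3.leaf i ∨ w = CatV3.leaf' i) :
    ¬ (cat3G α).IsDistKResolvingSet k Z ∧
      (cat3G α).IsDistKResolvingSet k (Z ∪ {CatV3.leaf''}) ∧
      (cat3G α).distKDim k = α + 1 := by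
  have hα0 : 0 < α := by omega
  have hZ'' : leaf'' ∉ Z := fun h => by obtain ⟨i, hi | hi⟩ := honly _ h <;> cases hi
  have hres : (cat3G α).IsDistKResolvingSet k (Z ∪ {leaf''}) :=
    isDistKResolvingSet_of_forall_leaf_mem hα0 hk
      (fun i => (hpair i).imp (fun h => .inl h.1) fun h => .inl h.1) (.inr rfl)
  have hinj : Set.InjOn pos Z := by
    intro x hx y hy hxy
    obtain ⟨i, rfl | rfl⟩ := honly x hx <;> obtain ⟨j, rfl | rfl⟩ := honly y hy <;>
      obtain rfl : i = j := Fin.ext hxy <;> have := hpair i <;> tauto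
  refine ⟨fun hZ => ?_, hres, distKDim_eq hres ?_ fun S hS => add_one_le_ncard hα0 hS⟩
  · rcases hpair ⟨α - 1, by omega⟩ with ⟨-, h⟩ | ⟨-, h⟩
    · exact hZ'' ((leaf'_mem_or_leaf''_mem hZ rfl).resolve_left h)
    · exact hZ'' ((leaf_mem_or_leaf''_mem hZ rfl).resolve_left h)
  · calc (Z ∪ {leaf''}).ncard ≤ Z.ncard + 1 := (Set.ncard_union_le _ _).trans (by simp)
      _ ≤ α + 1 := by grw [ncard_le_of_injOn_pos hα0 hinj]
end

section
/- Let α ≥ 4 and let G be the tree obtained from the path v_1 v_2 … v_α by attaching exactly two leaves ℓ_i and ℓ'_i to v_i for each i ∈ {1, …, α}. Then for every integer k ≥ 2, every set Z of vertices of G containing at least one vertex of each pair {ℓ_i, ℓ'_i}, i ∈ {1, …, α}, is a distance-k resolving set of G. -/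
/-- Vertices of the caterpillar tree obtained from the path `v_1 v_2 … v_α` by attaching
two leaves `ℓ_i, ℓ'_i` to each `v_i` (`v_{i+1} = v i`, `ℓ_{i+1} = leaf i`,
`ℓ'_{i+1} = leaf' i` for `i : Fin α`). -/
inductive CatV (α : ℕ) : Type where
  | v : Fin α → CatV α
  | leaf : Fin α → CatV α
  | leaf' : Fin α → CatV α

/-- Edges: `v_i v_{i+1}`, `v_i ℓ_i`, `v_i ℓ'_i`. -/
def catAdj (α : ℕ) : CatV α → CatV α → Prop
  | .v i, .v j => j.val = i.val + 1
  | .v i, .leaf j => i = j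
  | .v i, .leaf' j => i = j
  | _, _ => False

def catG (α : ℕ) : SimpleGraph (CatV α) := SimpleGraph.fromRel (catAdj α)

deriving instance DecidableEq for CatV

namespace Cat
variable {α : ℕ}

def pos : CatV α → ℕ
  | .v i => i | .leaf i => i | .leaf' i => i

def ht : CatV α → ℕ
  | .v _ => 0 | .leaf _ => 1 | .leaf' _ => 1

def D (x y : CatV α) : ℕ :=
  if x = y then 0 else Nat.dist (pos x) (pos y) + ht x + ht y

lemma ht_le (x : CatV α) : ht x ≤ 1 := by cases x <;> simp [ht]

lemma adj_key {a b : CatV α} (h : (catG α).Adj a b) :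
    Nat.dist (pos a) (pos b) + ht a + ht b = 1 := by
  rw [catG, SimpleGraph.fromRel_adj] at h
  obtain ⟨hne, h | h⟩ := h <;>
    cases a <;> cases b <;> simp_all [catAdj, pos, ht, Nat.dist] <;> omega

lemma step {a b z : CatV α} (h : (catG α).Adj a b) : D a z ≤ D b z + 1 := by
  have key := adj_key h
  have hne := h.ne
  have tri := Nat.dist.triangle_inequality (pos a) (pos b) (pos z)
  unfold D
  split_ifs with h1 h2 h2
  · omega
  · omega
  · subst h2
    omega
  · omega

lemma D_le_walk {x z : CatV α} (w : (catG α).Walk x z) : D x z ≤ w.length := by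
  induction w with
  | nil => simp [D]
  | cons h p ih =>
    simp only [SimpleGraph.Walk.length_cons]
    exact (step h).trans (Nat.add_le_add_right ih 1)

lemma adj_vl (i : Fin α) : (catG α).Adj (.v i) (.leaf i) := by
  rw [catG, SimpleGraph.fromRel_adj]
  exact ⟨by simp, Or.inl rfl⟩

lemma adj_vl' (i : Fin α) : (catG α).Adj (.v i) (.leaf' i) := by
  rw [catG, SimpleGraph.fromRel_adj]
  exact ⟨by simp, Or.inl rfl⟩

lemma adj_vv (i j : Fin α) (h : j.val = i.val + 1) : (catG α).Adj (.v i) (.v j) := by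
  rw [catG, SimpleGraph.fromRel_adj]
  refine ⟨?_, Or.inl h⟩
  intro hc
  cases hc
  omega

lemma walk_spine : ∀ (n : ℕ) (i j : Fin α), j.val = i.val + n →
    ∃ w : (catG α).Walk (.v i) (.v j), w.length = n := by
  intro n
  induction n with
  | zero =>
    intro i j h
    have : i = j := Fin.ext (by omega)
    subst this
    exact ⟨.nil, rfl⟩
  | succ m ih =>
    intro i j h
    have hlt : i.val + 1 < α := by omega
    obtain ⟨w, hw⟩ := ih ⟨i.val + 1, hlt⟩ j (by show j.val = i.val + 1 + m; omega)
    exact ⟨.cons (adj_vv i ⟨i.val + 1, hlt⟩ rfl) w, by simp [hw]⟩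

lemma exists_walk_vv (i j : Fin α) :
    ∃ w : (catG α).Walk (.v i) (.v j), w.length = Nat.dist i.val j.val := by
  rcases le_total i.val j.val with h | h
  · obtain ⟨w, hw⟩ := walk_spine (j.val - i.val) i j (by omega)
    exact ⟨w, by rw [hw]; simp only [Nat.dist]; omega⟩
  · obtain ⟨w, hw⟩ := walk_spine (i.val - j.val) j i (by omega)
    exact ⟨w.reverse, by rw [SimpleGraph.Walk.length_reverse, hw]; simp only [Nat.dist]; omega⟩

def posF : CatV α → Fin α
  | .v i => i | .leaf i => i | .leaf' i => i

lemma pos_posF (x : CatV α) : (posF x).val = pos x := by cases x <;> rfl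

lemma exists_walk_to_v (x : CatV α) :
    ∃ w : (catG α).Walk x (.v (posF x)), w.length = ht x := by
  cases x with
  | v i => exact ⟨.nil, rfl⟩
  | leaf i => exact ⟨.cons (adj_vl i).symm .nil, rfl⟩
  | leaf' i => exact ⟨.cons (adj_vl' i).symm .nil, rfl⟩

lemma dist_eq_D (x y : CatV α) : (catG α).dist x y = D x y := by
  obtain ⟨w1, h1⟩ := exists_walk_to_v x
  obtain ⟨w2, h2⟩ := exists_walk_to_v y
  obtain ⟨ws, hs⟩ := exists_walk_vv (posF x) (posF y)
  set w : (catG α).Walk x y := w1.append (ws.append w2.reverse) with hwdef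
  have hlen : w.length = ht x + Nat.dist (pos x) (pos y) + ht y := by
    simp [hwdef, SimpleGraph.Walk.length_append, SimpleGraph.Walk.length_reverse,
      h1, h2, hs, pos_posF]
    omega
  have hle : (catG α).dist x y ≤ D x y := by
    rcases eq_or_ne x y with rfl | hne
    · simp [D, SimpleGraph.dist_self]
    · have := SimpleGraph.dist_le w
      rw [hlen] at this
      unfold D
      rw [if_neg hne]
      omega
  have hge : D x y ≤ (catG α).dist x y := by
    obtain ⟨p, hp⟩ := (w.reachable).exists_walk_length_eq_dist
    rw [← hp]
    exact D_le_walk p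
  omega

lemma two_leaves {a b c : CatV α} (ha : ht a = 1) (hb : ht b = 1) (hc : ht c = 1)
    (hab : pos a = pos b) (hbc : pos b = pos c) (hac : a ≠ c) (hbc' : b ≠ c) : a = b := by
  cases a <;> cases b <;> cases c <;> simp_all [ht, pos, Fin.val_inj]

lemma v_eq {a b : CatV α} (ha : ht a = 0) (hb : ht b = 0) (hab : pos a = pos b) : a = b := by
  cases a <;> cases b <;> simp_all [ht, pos, Fin.val_inj]

end Cat

open Cat in
/-- for the caterpillar obtained from the path `v_1 … v_α` (`α ≥ 4`) by
attaching two leaves to each `v_i`, and `k ≥ 2`, any set containing at least one vertex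
of each pair `{ℓ_i, ℓ'_i}` is a distance-k resolving set. -/
theorem stmt_15 (α : ℕ) (hα : 4 ≤ α) (k : ℕ) (hk : 2 ≤ k) (Z : Set (CatV α))
    (hpair : ∀ i : Fin α, CatV.leaf i ∈ Z ∨ CatV.leaf' i ∈ Z) :
    (catG α).IsDistKResolvingSet k Z := by
  -- choose a leaf z_i ∈ Z at each position
  have hz : ∀ i : Fin α, ∃ z ∈ Z, pos z = i.val ∧ ht z = 1 := by
    intro i
    rcases hpair i with h | h
    · exact ⟨_, h, rfl, rfl⟩
    · exact ⟨_, h, rfl, rfl⟩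
  intro x y hxy
  obtain ⟨zi, hziZ, hzip, hzih⟩ := hz (posF x)
  obtain ⟨zj, hzjZ, hzjp, hzjh⟩ := hz (posF y)
  rw [pos_posF] at hzip hzjp
  simp only [SimpleGraph.distK, dist_eq_D]
  rcases eq_or_ne (pos x) (pos y) with hpeq | hpne
  · -- same position
    refine ⟨zi, hziZ, ?_⟩
    have hDx : D x zi = if x = zi then 0 else ht x + 1 := by
      unfold D; split_ifs with h
      · rfl
      · rw [hzip, hzih, Nat.dist_self]; omega
    have hDy : D y zi = if y = zi then 0 else ht y + 1 := by
      unfold D; split_ifs with h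
      · rfl
      · rw [hzip, ← hpeq, hzih, Nat.dist_self]; omega
    have hx1 := ht_le x
    have hy1 := ht_le y
    -- show D x zi ≠ D y zi
    have hne : D x zi ≠ D y zi := by
      intro heq
      by_cases h1 : x = zi <;> by_cases h2 : y = zi
      · exact hxy (h1.trans h2.symm)
      · rw [hDx, hDy, if_pos h1, if_neg h2] at heq; omega
      · rw [hDx, hDy, if_neg h1, if_pos h2] at heq; omega
      · rw [hDx, hDy, if_neg h1, if_neg h2] at heq
        have hht : ht x = ht y := by omega
        have hcases : ht x = 0 ∨ ht x = 1 := by omega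
        rcases hcases with h0 | h0
        · exact hxy (v_eq h0 (by omega) hpeq)
        · exact hxy (two_leaves h0 (by omega) hzih hpeq (by omega) h1 h2)
    have d1 : D x zi ≤ 2 := by rw [hDx]; split_ifs <;> omega
    have d2 : D y zi ≤ 2 := by rw [hDy]; split_ifs <;> omega
    omega
  · -- different positions
    have hxzj : x ≠ zj := fun h => hpne (by rw [h, hzjp])
    have hyzi : y ≠ zi := fun h => hpne (by rw [h, hzip])
    have hdij : 1 ≤ Nat.dist (pos x) (pos y) := by
      simp only [Nat.dist]
      omega
    have hDxzi : D x zi = if x = zi then 0 else ht x + 1 := by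
      unfold D; split_ifs with h
      · rfl
      · rw [hzip, hzih, Nat.dist_self]; omega
    have hDyzi : D y zi = Nat.dist (pos y) (pos x) + ht y + 1 := by
      unfold D; rw [if_neg hyzi, hzip, hzih]
    have hDxzj : D x zj = Nat.dist (pos x) (pos y) + ht x + 1 := by
      unfold D; rw [if_neg hxzj, hzjp, hzjh]
    have hDyzj : D y zj = if y = zj then 0 else ht y + 1 := by
      unfold D; split_ifs with h
      · rfl
      · rw [hzjp, hzjh, Nat.dist_self]; omega
    have hsym : Nat.dist (pos x) (pos y) = Nat.dist (pos y) (pos x) := Nat.dist_comm _ _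
    have hx1 := ht_le x
    have hy1 := ht_le y
    by_cases hcase : min (D x zi) (k+1) ≠ min (D y zi) (k+1)
    · exact ⟨zi, hziZ, hcase⟩
    · push_neg at hcase
      refine ⟨zj, hzjZ, ?_⟩
      -- derive: D x zi = 2, D y zi = 2, hence ht x = 1, ht y = 0, dist = 1
      have h1 : D x zi ≤ 2 := by rw [hDxzi]; split_ifs <;> omega
      have h2 : 2 ≤ D y zi := by omega
      have hx2 : D x zi = 2 ∧ D y zi = 2 := by omega
      have hhtx : ht x = 1 := by
        rcases hx2 with ⟨ha, _⟩; rw [hDxzi] at ha; split_ifs at ha <;> omega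
      have hdist1 : Nat.dist (pos x) (pos y) = 1 ∧ ht y = 0 := by
        rcases hx2 with ⟨_, hb⟩; rw [hDyzi] at hb; omega
      have hXj : D x zj = 3 := by rw [hDxzj]; omega
      have hYj : D y zj ≤ 1 := by rw [hDyzj]; split_ifs <;> omega
      omega
end

section
/- Let n = 2x with x ≥ 3, and let C_n be the cycle with vertices u_1, u_2, …, u_n in cyclic order. Then every set S of vertices of C_n containing at least one vertex of each pair {u_{2i−1}, u_{2i}} for i ∈ {1, …, x} is a distance-1 resolving set of C_n. -/
section helpers

variable {n : ℕ}

lemma cycleG_adj {a b : ZMod n} :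
    (cycleG n).Adj a b ↔ a ≠ b ∧ (a - b = 1 ∨ b - a = 1) := by
  simp [cycleG, SimpleGraph.fromRel_adj]

lemma cycleG_reach_add (a : ZMod n) (k : ℕ) (h1 : (1 : ZMod n) ≠ 0) :
    (cycleG n).Reachable a (a + (k : ZMod n)) := by
  induction k with
  | zero => simpa using SimpleGraph.Reachable.refl a
  | succ k ih =>
    refine ih.trans (SimpleGraph.Adj.reachable ?_)
    rw [cycleG_adj]
    push_cast
    constructor
    · intro h
      apply h1
      have := sub_eq_zero_of_eq h
      simpa using this.symm
    · right; ring

lemma cycleG_reach (a b : ZMod n) [NeZero n] (h1 : (1 : ZMod n) ≠ 0) :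
    (cycleG n).Reachable a b := by
  have := cycleG_reach_add a (b - a).val h1
  rwa [ZMod.natCast_val, ZMod.cast_id, add_sub_cancel] at this
end helpers
section partner

/-- The pair-partner of a vertex: even residue pairs with its predecessor,
odd residue with its successor. -/
def pnr (n : ℕ) (v : ZMod n) : ZMod n := if v.val % 2 = 0 then v - 1 else v + 1

set_option linter.unusedSectionVars false
variable {n : ℕ} [NeZero n]

lemma val_add_one_parity (hev : 2 ∣ n) (v : ZMod n) :
    (v + 1).val % 2 = (v.val + 1) % 2 := by
  have hn : 1 < n := by
    have := NeZero.ne n; rcases hev with ⟨k, rfl⟩; omega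
  have h1 : (1 : ZMod n).val = 1 := by
    rw [ZMod.val_one_eq_one_mod, Nat.mod_eq_of_lt hn]
  rw [ZMod.val_add, h1, Nat.mod_mod_of_dvd _ hev]

lemma pnr_invol (hev : 2 ∣ n) (v : ZMod n) : pnr n (pnr n v) = v := by
  have key : ∀ w : ZMod n, (w + 1).val % 2 = (w.val + 1) % 2 := val_add_one_parity hev
  unfold pnr
  by_cases h : v.val % 2 = 0
  · rw [if_pos h]
    have : ((v - 1) + 1).val % 2 = ((v - 1).val + 1) % 2 := key (v - 1)
    rw [sub_add_cancel] at this
    have h2 : (v - 1).val % 2 ≠ 0 := by omega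
    rw [if_neg h2, sub_add_cancel]
  · rw [if_neg h]
    have : (v + 1).val % 2 = (v.val + 1) % 2 := key v
    have h2 : (v + 1).val % 2 = 0 := by omega
    rw [if_pos h2, add_sub_cancel_right]

lemma pnr_inj (hev : 2 ∣ n) {v w : ZMod n} (h : pnr n v = pnr n w) : v = w := by
  have := congrArg (pnr n) h
  rwa [pnr_invol hev, pnr_invol hev] at this

lemma pnr_dif (v : ZMod n) : pnr n v - v = 1 ∨ v - pnr n v = 1 := by
  unfold pnr
  by_cases h : v.val % 2 = 0
  · rw [if_pos h]; right; ring
  · rw [if_neg h]; left; ring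

end partner
/-- for the even cycle `C_{2x}` (`x ≥ 3`), whose vertices are
`u_1, …, u_n` in cyclic order (here `u_j` is `(j : ZMod n)`), any set containing at
least one vertex of each pair `{u_{2i-1}, u_{2i}}` is a distance-1 resolving set. -/
theorem stmt_16 (x : ℕ) (hx : 3 ≤ x) (S : Set (ZMod (2 * x)))
    (hS : ∀ i : ℕ, 1 ≤ i → i ≤ x →
      ((2 * i - 1 : ℕ) : ZMod (2 * x)) ∈ S ∨ ((2 * i : ℕ) : ZMod (2 * x)) ∈ S) :
    (cycleG (2 * x)).IsDistKResolvingSet 1 S := by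
  haveI : NeZero (2 * x) := ⟨by omega⟩
  have hev : 2 ∣ 2 * x := ⟨x, rfl⟩
  -- small naturals are nonzero in ZMod (2*x)
  have hne : ∀ k : ℕ, 0 < k → k < 2 * x → ((k : ℕ) : ZMod (2 * x)) ≠ 0 := by
    intro k hk1 hk2 h
    rw [ZMod.natCast_eq_zero_iff] at h
    have := Nat.le_of_dvd hk1 h
    omega
  have h1 : (1 : ZMod (2 * x)) ≠ 0 := by
    have := hne 1 (by omega) (by omega); simpa using this
  have hreach : ∀ a b : ZMod (2 * x), (cycleG (2 * x)).Reachable a b :=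
    fun a b => cycleG_reach a b h1
  -- partner membership
  have pmem : ∀ v : ZMod (2 * x), v ∉ S → pnr (2 * x) v ∈ S := by
    intro v hv
    have hcast : ((v.val : ℕ) : ZMod (2 * x)) = v := by
      rw [ZMod.natCast_val, ZMod.cast_id]
    have hvval : v.val < 2 * x := ZMod.val_lt v
    unfold pnr
    by_cases hpar : v.val % 2 = 0
    · rw [if_pos hpar]
      by_cases h0 : v.val = 0
      · have hv0 : v = 0 := (ZMod.val_eq_zero v).mp h0
        rcases hS x (by omega) le_rfl with h | h
        · have : ((2 * x - 1 : ℕ) : ZMod (2 * x)) = v - 1 := by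
            rw [Nat.cast_sub (by omega), Nat.cast_one, hv0]
            simp
          rwa [this] at h
        · exact absurd (by rw [hv0]; simpa using h) hv
      · set i := v.val / 2 with hi
        have hveq : v.val = 2 * i := by omega
        rcases hS i (by omega) (by omega) with h | h
        · have : ((2 * i - 1 : ℕ) : ZMod (2 * x)) = v - 1 := by
            rw [Nat.cast_sub (by omega), Nat.cast_one, ← hveq, hcast]
          rwa [this] at h
        · exact absurd (by rwa [show ((2 * i : ℕ) : ZMod (2 * x)) = v by
            rw [← hveq, hcast]] at h) hv
    · rw [if_neg hpar]
      set i := (v.val + 1) / 2 with hi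
      have hveq : v.val = 2 * i - 1 ∧ 1 ≤ i ∧ i ≤ x := by omega
      rcases hS i (by omega) (by omega) with h | h
      · exact absurd (by rwa [show ((2 * i - 1 : ℕ) : ZMod (2 * x)) = v by
          rw [← hveq.1, hcast]] at h) hv
      · have : ((2 * i : ℕ) : ZMod (2 * x)) = v + 1 := by
          have h2i : 2 * i = v.val + 1 := by omega
          rw [h2i, Nat.cast_add, Nat.cast_one, hcast]
        rwa [this] at h
  -- distK computations
  have dK0 : ∀ z : ZMod (2 * x), (cycleG (2 * x)).distK 1 z z = 0 := by
    intro z; simp [SimpleGraph.distK]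
  have dK1 : ∀ a z : ZMod (2 * x), (cycleG (2 * x)).Adj a z →
      (cycleG (2 * x)).distK 1 a z = 1 := by
    intro a z h
    rw [SimpleGraph.distK, SimpleGraph.dist_eq_one_iff_adj.mpr h]
    norm_num
  have dKpos : ∀ a z : ZMod (2 * x), a ≠ z → (cycleG (2 * x)).distK 1 a z ≠ 0 := by
    intro a z h
    have := (hreach a z).pos_dist_of_ne h
    simp only [SimpleGraph.distK]
    omega
  have dK2 : ∀ a z : ZMod (2 * x), a ≠ z → ¬ (cycleG (2 * x)).Adj a z →
      (cycleG (2 * x)).distK 1 a z = 2 := by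
    intro a z h hna
    have hpos := (hreach a z).pos_dist_of_ne h
    have hd1 : (cycleG (2 * x)).dist a z ≠ 1 := by
      intro hc; exact hna (SimpleGraph.dist_eq_one_iff_adj.mp hc)
    simp only [SimpleGraph.distK]
    omega
  -- pnr is adjacent to its argument
  have pnr_ne : ∀ v : ZMod (2 * x), pnr (2 * x) v ≠ v := by
    intro v hc
    rcases pnr_dif v with h | h <;> rw [hc, sub_self] at h <;> exact h1 h.symm
  have pnr_adj : ∀ v : ZMod (2 * x), (cycleG (2 * x)).Adj v (pnr (2 * x) v) := by
    intro v
    rw [cycleG_adj]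
    exact ⟨fun hc => pnr_ne v hc.symm, (pnr_dif v).symm⟩
  intro a b hab
  by_cases haS : a ∈ S
  · exact ⟨a, haS, by rw [dK0]; exact fun hc => dKpos b a (Ne.symm hab) hc.symm⟩
  by_cases hbS : b ∈ S
  · exact ⟨b, hbS, by rw [dK0 b]; exact dKpos a b hab⟩
  set z := pnr (2 * x) a with hzdef
  have hzS : z ∈ S := pmem a haS
  have hAz : (cycleG (2 * x)).Adj a z := pnr_adj a
  by_cases hbz : (cycleG (2 * x)).Adj b z
  · -- b is the other neighbor of z; use the partner of b
    set z' := pnr (2 * x) b with hz'def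
    have hz'S : z' ∈ S := pmem b hbS
    have hBz' : (cycleG (2 * x)).Adj b z' := pnr_adj b
    have hz'z : z' ≠ z := by
      intro hc
      have hpp : pnr (2 * x) b = pnr (2 * x) a := by rw [← hz'def, ← hzdef]; exact hc
      exact hab (pnr_inj hev hpp).symm
    -- establish z' - a = ±3
    have key : z' - a = 3 ∨ a - z' = 3 := by
      have e1 := pnr_dif a
      have e2 := (cycleG_adj.mp hbz).2
      have e3 := pnr_dif b
      rw [← hzdef] at e1
      rw [← hz'def] at e3
      have hba : b - a ≠ 0 := sub_ne_zero_of_ne (Ne.symm hab)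
      have hzz' : z' - z ≠ 0 := sub_ne_zero_of_ne hz'z
      rcases e1 with e1 | e1 <;> rcases e2 with e2 | e2 <;> rcases e3 with e3 | e3
      · left; linear_combination e1 + e2 + e3
      · exact absurd (by linear_combination e2 - e3) hzz'
      · exact absurd (by linear_combination e1 - e2) hba
      · exact absurd (by linear_combination e1 - e2) hba
      · exact absurd (by linear_combination e2 - e1) hba
      · exact absurd (by linear_combination e2 - e1) hba
      · exact absurd (by linear_combination e3 - e2) hzz'
      · right; linear_combination e1 + e2 + e3
    have h3 : (3 : ZMod (2 * x)) ≠ 0 := by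
      have := hne 3 (by omega) (by omega); push_cast at this; exact this
    have h2' : (2 : ZMod (2 * x)) ≠ 0 := by
      have := hne 2 (by omega) (by omega); push_cast at this; exact this
    have h4 : (4 : ZMod (2 * x)) ≠ 0 := by
      have := hne 4 (by omega) (by omega); push_cast at this; exact this
    have haz' : a ≠ z' := by
      intro hc
      rcases key with h | h <;> rw [hc, sub_self] at h <;> exact h3 h.symm
    have hnadj : ¬ (cycleG (2 * x)).Adj a z' := by
      rw [cycleG_adj]
      rintro ⟨-, h | h⟩
      · rcases key with k | k
        · exact h4 (by linear_combination -h - k)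
        · exact h2' (by linear_combination h - k)
      · rcases key with k | k
        · exact h2' (by linear_combination h - k)
        · exact h4 (by linear_combination -h - k)
    refine ⟨z', hz'S, ?_⟩
    rw [dK2 a z' haz' hnadj, dK1 b z' hBz']
    omega
  · -- z resolves a and b
    have hbz' : b ≠ z := fun hc => hbS (hc ▸ hzS)
    refine ⟨z, hzS, ?_⟩
    rw [dK1 a z hAz, dK2 b z hbz' hbz]
    omega
end

section
/- Let W be the wheel graph C_5 + K_1, with hub vertex v adjacent to all of the cycle vertices u_1, u_2, u_3, u_4, u_5, which appear in cyclic order on C_5. Then for every positive integer k, every set S of vertices of W containing at least one vertex of each of the pairs {u_1, u_2}, {u_3, u_4}, and {u_5, v} is a distance-k resolving set of W. -/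
/-- Vertices of the wheel `C_5 + K_1`: a hub and rim vertices `u_1, …, u_5` in cyclic
order (`u_{i+1} = rim i` for `i : Fin 5`). -/
inductive WheelV : Type where
  | hub : WheelV
  | rim : Fin 5 → WheelV

/-- Edges: hub to every rim vertex, and consecutive rim vertices (cyclically). -/
def wheelAdj : WheelV → WheelV → Prop
  | .hub, .rim _ => True
  | .rim i, .rim j => j.val = (i.val + 1) % 5
  | _, _ => False

def wheelG : SimpleGraph WheelV := SimpleGraph.fromRel wheelAdj


deriving instance DecidableEq, Fintype for WheelV

def D : WheelV → WheelV → ℕ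
  | .hub, .hub => 0
  | .hub, .rim _ => 1
  | .rim _, .hub => 1
  | .rim i, .rim j =>
    if i = j then 0 else if j.val = (i.val+1)%5 ∨ i.val = (j.val+1)%5 then 1 else 2

instance instDecWheelAdj : ∀ x y : WheelV, Decidable (wheelAdj x y)
  | .hub, .rim _ => .isTrue trivial
  | .rim i, .rim j => inferInstanceAs (Decidable (j.val = (i.val + 1) % 5))
  | .hub, .hub => .isFalse id
  | .rim _, .hub => .isFalse id

lemma adj_iff (x y : WheelV) : wheelG.Adj x y ↔ x ≠ y ∧ (wheelAdj x y ∨ wheelAdj y x) :=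
  Iff.rfl

lemma hub_adj (i : Fin 5) : wheelG.Adj .hub (.rim i) := by
  rw [adj_iff]; exact ⟨by simp, Or.inl trivial⟩

lemma dist_two {x y : WheelV} (hne : x ≠ y) (hna : ¬ wheelG.Adj x y) : wheelG.dist x y = 2 := by
  obtain ⟨w, hw⟩ : ∃ w : wheelG.Walk x y, w.length ≤ 2 := by
    cases x with
    | hub => cases y with
      | hub => exact ⟨.nil, by simp⟩
      | rim j => exact ⟨(hub_adj j).toWalk, by simp [SimpleGraph.Adj.toWalk]⟩
    | rim i => cases y with
      | hub => exact ⟨((hub_adj i).symm).toWalk, by simp [SimpleGraph.Adj.toWalk]⟩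
      | rim j => exact ⟨.cons ((hub_adj i).symm) (hub_adj j).toWalk,
          by simp [SimpleGraph.Adj.toWalk]⟩
  have h2 : wheelG.dist x y ≤ 2 := le_trans (wheelG.dist_le w) hw
  have h0 : 0 < wheelG.dist x y := SimpleGraph.Reachable.pos_dist_of_ne ⟨w⟩ hne
  have h1 : wheelG.dist x y ≠ 1 := fun h => hna (SimpleGraph.dist_eq_one_iff_adj.mp h)
  omega

lemma dist_eq_D (x y : WheelV) : wheelG.dist x y = D x y := by
  by_cases hxy : x = y
  · subst hxy; cases x <;> simp [D, SimpleGraph.dist_self]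
  by_cases hadj : wheelG.Adj x y
  · rw [SimpleGraph.dist_eq_one_iff_adj.mpr hadj]
    obtain ⟨-, h⟩ := (adj_iff x y).mp hadj
    cases x with
    | hub => cases y with
      | hub => exact absurd rfl hxy
      | rim j => simp [D]
    | rim i => cases y with
      | hub => simp [D]
      | rim j =>
        have h2 : (j.val = (i.val+1)%5 ∨ i.val = (j.val+1)%5) := h
        simp only [D, if_neg (show ¬ i = j by rintro rfl; exact hxy rfl)]
        rw [if_pos h2]
  · rw [dist_two hxy hadj]
    rw [adj_iff] at hadj
    push_neg at hadj
    have h' := hadj hxy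
    cases x with
    | hub => cases y with
      | hub => exact absurd rfl hxy
      | rim j => exact absurd trivial h'.1
    | rim i => cases y with
      | hub => exact absurd trivial h'.2
      | rim j =>
        simp only [D, if_neg (show ¬ i = j by rintro rfl; exact hxy rfl)]
        rw [if_neg]
        rintro (h1 | h2)
        · exact h'.1 h1
        · exact h'.2 h2


lemma D_le_two : ∀ x y : WheelV, D x y ≤ 2 := by decide

lemma distK_eq_D (k : ℕ) (hk : 1 ≤ k) (x y : WheelV) : wheelG.distK k x y = D x y := by
  unfold SimpleGraph.distK
  rw [dist_eq_D]
  exact min_eq_left (le_trans (D_le_two x y) (by omega))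

lemma keyH : ∀ a b c : WheelV, (a = .rim 0 ∨ a = .rim 1) → (b = .rim 2 ∨ b = .rim 3) →
    (c = .rim 4 ∨ c = .hub) → ∀ x y : WheelV, x ≠ y →
    D x a ≠ D y a ∨ D x b ≠ D y b ∨ D x c ≠ D y c := by decide

/-- any set of vertices of `C_5 + K_1` containing at least one vertex of
each of the pairs `{u_1, u_2}`, `{u_3, u_4}`, `{u_5, v}` is a distance-k resolving set,
for every `k ≥ 1`. -/
theorem stmt_18 (k : ℕ) (hk : 1 ≤ k) (S : Set WheelV)
    (h12 : WheelV.rim 0 ∈ S ∨ WheelV.rim 1 ∈ S)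
    (h34 : WheelV.rim 2 ∈ S ∨ WheelV.rim 3 ∈ S)
    (h5v : WheelV.rim 4 ∈ S ∨ WheelV.hub ∈ S) :
    wheelG.IsDistKResolvingSet k S := by
  intro x y hxy
  obtain ⟨a, haS, ha⟩ : ∃ a ∈ S, a = WheelV.rim 0 ∨ a = WheelV.rim 1 :=
    h12.elim (fun h => ⟨_, h, Or.inl rfl⟩) (fun h => ⟨_, h, Or.inr rfl⟩)
  obtain ⟨b, hbS, hb⟩ : ∃ b ∈ S, b = WheelV.rim 2 ∨ b = WheelV.rim 3 :=
    h34.elim (fun h => ⟨_, h, Or.inl rfl⟩) (fun h => ⟨_, h, Or.inr rfl⟩)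
  obtain ⟨c, hcS, hc⟩ : ∃ c ∈ S, c = WheelV.rim 4 ∨ c = WheelV.hub :=
    h5v.elim (fun h => ⟨_, h, Or.inl rfl⟩) (fun h => ⟨_, h, Or.inr rfl⟩)
  rcases keyH a b c ha hb hc x y hxy with h | h | h
  · exact ⟨a, haS, by rwa [distK_eq_D k hk, distK_eq_D k hk]⟩
  · exact ⟨b, hbS, by rwa [distK_eq_D k hk, distK_eq_D k hk]⟩
  · exact ⟨c, hcS, by rwa [distK_eq_D k hk, distK_eq_D k hk]⟩
end
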